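/- arXiv:2202.06925 — 11 statements merged into one kernel-verified Lean document; each statement's English description precedes it below -/
import Mathlib

section
/- Let (V,w) be an additively separable hedonic game, let π be a Nash stable partition of V, and suppose there is an assignment of colors from {1,…,k} to the parts of π such that any two distinct parts P, P' containing vertices u ∈ P, v ∈ P' which are adjacent or have a common neighbor in the underlying graph (i.e., are at distance at most 2) receive distinct colors. Then the vertex coloring c : V → {1,…,k} assigning to each vertex the color of its part is a Stable k-Coloring of the game. -/
/-!
In a Nash stable partition every vertex `v` weakly prefers its own part to every other part.
Since parts at distance at most two get distinct colours, the neighbours of `v` of any given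
colour all lie in a single part: the part of `v` for its own colour, and for another colour `j`
the part of any neighbour of colour `j`. Hence the utility of `v` towards a colour class is
either `0` or its utility towards one part, and stability of the colouring follows from Nash
stability of the partition.
-/

/-- A partition of the finite vertex set `V`, represented by the function sending each
vertex to its part. -/
structure ASHGPart (V : Type*) [DecidableEq V] where
  part : V → Finset V
  mem_part : ∀ v, v ∈ part v
  eq_of_mem : ∀ u v, u ∈ part v → part u = part v

/-- The utility of vertex `v` in coalition `S`: the sum of `w v u` over `u ∈ S`, `u ≠ v`. -/
def util {V : Type*} [DecidableEq V] (w : V → V → ℤ) (v : V) (S : Finset V) : ℤ :=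
  ∑ u ∈ S.erase v, w v u

/-- A partition is Nash stable if every vertex has nonnegative utility in its own part and
does not prefer any other part of the partition. -/
def NashStable {V : Type*} [DecidableEq V] (w : V → V → ℤ) (π : ASHGPart V) : Prop :=
  ∀ v : V, 0 ≤ util w v (π.part v) ∧ ∀ x : V, util w v (π.part x) ≤ util w v (π.part v)

/-- A stable `k`-coloring of the game. -/
def StableColoring {V : Type*} [Fintype V] [DecidableEq V] (w : V → V → ℤ) {k : ℕ}
    (c : V → Fin k) : Prop :=
  ∀ v : V,
    0 ≤ ∑ u ∈ Finset.univ.filter (fun u => u ≠ v ∧ c u = c v), w v u ∧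
    ∀ j : Fin k,
      ∑ u ∈ Finset.univ.filter (fun u => u ≠ v ∧ c u = j), w v u ≤
      ∑ u ∈ Finset.univ.filter (fun u => u ≠ v ∧ c u = c v), w v u


/-- The underlying (undirected simple) graph of the game: distinct `u, v` are adjacent
iff `w u v ≠ 0` or `w v u ≠ 0`. -/
def underlying {V : Type*} (w : V → V → ℤ) : SimpleGraph V where
  Adj u v := u ≠ v ∧ (w u v ≠ 0 ∨ w v u ≠ 0)
  symm := ⟨fun u v h => ⟨h.1.symm, h.2.symm⟩⟩
  loopless := ⟨fun v h => h.1 rfl⟩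

namespace ASHGPart

variable {V : Type*} [DecidableEq V]

theorem part_ne_of_notMem (π : ASHGPart V) {u x : V} (hu : u ∉ π.part x) :
    π.part u ≠ π.part x :=
  fun h => hu (h ▸ π.mem_part u)

end ASHGPart

section ColorUtil

variable {V : Type*} [Fintype V] [DecidableEq V] {k : ℕ}

def colorUtil (w : V → V → ℤ) (c : V → Fin k) (v : V) (j : Fin k) : ℤ :=
  ∑ u ∈ Finset.univ.filter (fun u => u ≠ v ∧ c u = j), w v u

variable {w : V → V → ℤ} {c : V → Fin k} {v : V} {j : Fin k}

theorem util_eq_colorUtil {S : Finset V} (hS : ∀ u ∈ S, c u = j)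
    (hnbr : ∀ u, u ≠ v → c u = j → w v u ≠ 0 → u ∈ S) :
    util w v S = colorUtil w c v j := by
  refine Finset.sum_subset (fun u hu => ?_) (fun u hu huS => ?_)
  · obtain ⟨hne, hmem⟩ := Finset.mem_erase.mp hu
    simpa using And.intro hne (hS u hmem)
  · simp only [Finset.mem_filter, Finset.mem_univ, true_and] at hu
    by_contra hwu
    exact huS (Finset.mem_erase.mpr ⟨hu.1, hnbr u hu.1 hu.2 hwu⟩)

theorem colorUtil_eq_zero (h : ∀ u, u ≠ v → c u = j → w v u = 0) : colorUtil w c v j = 0 :=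
  Finset.sum_eq_zero fun u hu => by
    simp only [Finset.mem_filter, Finset.mem_univ, true_and] at hu
    exact h u hu.1 hu.2

end ColorUtil

theorem stmt_1_general {V : Type*} [Fintype V] [DecidableEq V] (w : V → V → ℤ)
    (π : ASHGPart V) (hπ : NashStable w π)
    (k : ℕ) (c : V → Fin k)
    (hconst : ∀ u v : V, π.part u = π.part v → c u = c v)
    (hproper : ∀ u v : V, π.part u ≠ π.part v →
      ((underlying w).Adj u v ∨ ∃ z, (underlying w).Adj u z ∧ (underlying w).Adj z v) →
      c u ≠ c v) :
    StableColoring w c := by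
  intro v
  have hmono : ∀ x, ∀ u ∈ π.part x, c u = c x := fun x u hu => hconst u x (π.eq_of_mem u x hu)
  have hown : util w v (π.part v) = colorUtil w c v (c v) :=
    util_eq_colorUtil (hmono v) fun u huv hcu hwu => by
      by_contra hu
      exact hproper v u (π.part_ne_of_notMem hu).symm (Or.inl ⟨huv.symm, Or.inl hwu⟩) hcu.symm
  change 0 ≤ colorUtil w c v (c v) ∧ ∀ j, colorUtil w c v j ≤ colorUtil w c v (c v)
  rw [← hown]
  refine ⟨(hπ v).1, fun j => ?_⟩
  by_cases hj : ∃ x, x ≠ v ∧ c x = j ∧ w v x ≠ 0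
  · obtain ⟨x, hxv, rfl, hwx⟩ := hj
    have hother : util w v (π.part x) = colorUtil w c v (c x) :=
      util_eq_colorUtil (hmono x) fun u huv hcu hwu => by
        by_contra hu
        exact hproper u x (π.part_ne_of_notMem hu)
          (Or.inr ⟨v, ⟨huv, Or.inr hwu⟩, ⟨hxv.symm, Or.inl hwx⟩⟩) hcu
    exact hother ▸ (hπ v).2 x
  · push Not at hj
    exact (colorUtil_eq_zero hj).symm ▸ (hπ v).1

theorem stmt_1 {V : Type*} [Fintype V] [DecidableEq V] (w : V → V → ℤ)
    (hw : ∀ v, w v v = 0) (π : ASHGPart V) (hπ : NashStable w π)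
    (k : ℕ) (c : V → Fin k)
    (hconst : ∀ u v : V, π.part u = π.part v → c u = c v)
    (hproper : ∀ u v : V, π.part u ≠ π.part v →
      ((underlying w).Adj u v ∨ ∃ z, (underlying w).Adj u z ∧ (underlying w).Adj z v) →
      c u ≠ c v) :
    StableColoring w c :=
  stmt_1_general w π hπ k c hconst hproper
end

section
/- Let π be a Nash stable partition of an additively separable hedonic game (V,w), let C be a part of π, and suppose C is the disjoint union of two nonempty sets C₁ and C₂ such that every u ∈ C₁ and v ∈ C₂ are non-adjacent in the underlying graph and have no common neighbor in it (i.e., are at distance at least 3). Then the partition obtained from π by replacing the part C with the two parts C₁ and C₂ is also Nash stable. -/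
/-- `S` and `T` are at distance at least `3` in `G`. -/
def SimpleGraph.FarApart {V : Type*} (G : SimpleGraph V) (S T : Finset V) : Prop :=
  ∀ u ∈ S, ∀ v ∈ T, ¬ G.Adj u v ∧ ¬ ∃ z, G.Adj u z ∧ G.Adj z v

lemma SimpleGraph.FarApart.symm {V : Type*} {G : SimpleGraph V} {S T : Finset V}
    (hST : G.FarApart S T) : G.FarApart T S :=
  fun u hu v hv => ⟨fun h => (hST v hv u hu).1 h.symm,
    fun ⟨z, huz, hzv⟩ => (hST v hv u hu).2 ⟨z, hzv.symm, huz.symm⟩⟩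

section Utility

variable {V : Type*} [DecidableEq V] (w : V → V → ℤ)

lemma util_union (v : V) {S T : Finset V} (h : Disjoint S T) :
    util w v (S ∪ T) = util w v S + util w v T := by
  rw [util, util, util, Finset.erase_union_distrib,
    Finset.sum_union (h.mono (Finset.erase_subset _ _) (Finset.erase_subset _ _))]

lemma util_eq_zero_of_forall_not_adj {v : V} {S : Finset V}
    (h : ∀ u ∈ S, ¬ (underlying w).Adj v u) : util w v S = 0 := by
  refine Finset.sum_eq_zero fun u hu => ?_
  have hnadj := h u (Finset.mem_of_mem_erase hu)
  simp only [underlying, not_and, not_or, not_not] at hnadj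
  exact (hnadj (Finset.ne_of_mem_erase hu).symm).1

lemma exists_adj_of_util_ne_zero {v : V} {S : Finset V} (h : util w v S ≠ 0) :
    ∃ u ∈ S, (underlying w).Adj v u := by
  by_contra! hS
  exact h (util_eq_zero_of_forall_not_adj w hS)

end Utility

namespace SimpleGraph.FarApart

variable {V : Type*} [DecidableEq V] {w : V → V → ℤ} {S T : Finset V}

lemma util_right_eq_zero (hST : (underlying w).FarApart S T) {v : V} (hv : v ∈ S) :
    util w v T = 0 :=
  util_eq_zero_of_forall_not_adj w fun u hu => (hST v hv u hu).1

/-- A vertex with nonzero utility in both sets would be a common neighbour of them. -/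
lemma util_eq_zero_or (hST : (underlying w).FarApart S T) (v : V) :
    util w v S = 0 ∨ util w v T = 0 := by
  by_contra! h
  obtain ⟨s, hs, hvs⟩ := exists_adj_of_util_ne_zero w h.1
  obtain ⟨t, ht, hvt⟩ := exists_adj_of_util_ne_zero w h.2
  exact (hST s hs t ht).2 ⟨v, hvs.symm, hvt⟩

lemma util_left_eq_util_union (hST : (underlying w).FarApart S T) (hdisj : Disjoint S T)
    {v : V} (hv : v ∈ S) : util w v S = util w v (S ∪ T) := by
  rw [util_union w v hdisj, hST.util_right_eq_zero hv, add_zero]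

/-- Each half of a part gives every vertex either nothing or the utility of the whole part. -/
lemma util_left_le_of_nashStable {π : ASHGPart V} (hπ : NashStable w π)
    (hST : (underlying w).FarApart S T) (hdisj : Disjoint S T) {x : V}
    (hunion : S ∪ T = π.part x) (v : V) : util w v S ≤ util w v (π.part v) := by
  rcases hST.util_eq_zero_or v with hS | hT
  · exact hS ▸ (hπ v).1
  · calc util w v S = util w v (π.part x) := by
          rw [← hunion, util_union w v hdisj, hT, add_zero]
      _ ≤ util w v (π.part v) := (hπ v).2 x

end SimpleGraph.FarApart

theorem stmt_2_general {V : Type*} [DecidableEq V] (w : V → V → ℤ)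
    (π : ASHGPart V) (hπ : NashStable w π)
    (v0 : V) (C C₁ C₂ : Finset V) (hC : C = π.part v0)
    (hdisj : Disjoint C₁ C₂) (hunion : C₁ ∪ C₂ = C)
    (hfar : ∀ u ∈ C₁, ∀ v ∈ C₂,
      ¬ (underlying w).Adj u v ∧ ¬ ∃ z, (underlying w).Adj u z ∧ (underlying w).Adj z v)
    (π' : ASHGPart V)
    (hπ' : ∀ x : V, π'.part x =
      if x ∈ C₁ then C₁ else if x ∈ C₂ then C₂ else π.part x) :
    NashStable w π' := by
  subst hC
  have hfar₁₂ : (underlying w).FarApart C₁ C₂ := hfar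
  have hfar₂₁ := hfar₁₂.symm
  have hunion' : C₂ ∪ C₁ = π.part v0 := Finset.union_comm C₂ C₁ ▸ hunion
  have hpart {v : V} (hv : v ∈ C₁ ∪ C₂) : π.part v = π.part v0 :=
    π.eq_of_mem v v0 (hunion ▸ hv)
  intro v
  have hown : util w v (π'.part v) = util w v (π.part v) := by
    rw [hπ' v]
    split_ifs with h₁ h₂
    · rw [hpart (Finset.mem_union_left _ h₁), ← hunion]
      exact hfar₁₂.util_left_eq_util_union hdisj h₁
    · rw [hpart (Finset.mem_union_right _ h₂), ← hunion']
      exact hfar₂₁.util_left_eq_util_union hdisj.symm h₂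
    · rfl
  refine ⟨hown ▸ (hπ v).1, fun x => hown ▸ ?_⟩
  rw [hπ' x]
  split_ifs
  · exact hfar₁₂.util_left_le_of_nashStable hπ hdisj hunion v
  · exact hfar₂₁.util_left_le_of_nashStable hπ hdisj.symm hunion' v
  · exact (hπ v).2 x

theorem stmt_2 {V : Type*} [Fintype V] [DecidableEq V] (w : V → V → ℤ)
    (hw : ∀ v, w v v = 0) (π : ASHGPart V) (hπ : NashStable w π)
    (v0 : V) (C C₁ C₂ : Finset V) (hC : C = π.part v0)
    (hdisj : Disjoint C₁ C₂) (hunion : C₁ ∪ C₂ = C)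
    (hne1 : C₁.Nonempty) (hne2 : C₂.Nonempty)
    (hfar : ∀ u ∈ C₁, ∀ v ∈ C₂,
      ¬ (underlying w).Adj u v ∧ ¬ ∃ z, (underlying w).Adj u z ∧ (underlying w).Adj z v)
    (π' : ASHGPart V)
    (hπ' : ∀ x : V, π'.part x =
      if x ∈ C₁ then C₁ else if x ∈ C₂ then C₂ else π.part x) :
    NashStable w π' :=
  stmt_2_general w π hπ v0 C C₁ C₂ hC hdisj hunion hfar π' hπ'
end

section
/- An additively separable hedonic game (V,w) admits a Nash stable partition if and only if it admits a Nash stable partition in which every part induces a connected subgraph of the square of the underlying graph, where the square is the simple graph on V in which distinct u, v are adjacent iff in the underlying graph they are adjacent or have a common neighbor. -/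
/-- The square of the underlying graph: distinct `u, v` are adjacent iff in the underlying
graph they are adjacent or have a common neighbor. -/
def squareGraph {V : Type*} (w : V → V → ℤ) : SimpleGraph V where
  Adj u v := u ≠ v ∧
    ((underlying w).Adj u v ∨ ∃ z, (underlying w).Adj u z ∧ (underlying w).Adj z v)
  symm := ⟨fun u v h => ⟨h.1.symm, h.2.imp (fun h' => h'.symm)
    (fun ⟨z, h1, h2⟩ => ⟨z, h2.symm, h1.symm⟩)⟩⟩
  loopless := ⟨fun v h => h.1 rfl⟩

/-!
Refine a Nash stable partition by splitting every part into the connected components of the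
square graph restricted to that part. A vertex `v` keeps in its new part every `u` with
`w v u ≠ 0`, since `u` is a neighbour of `v`. Two such vertices in a common old part have the
common neighbour `v`, so they are adjacent in the square and lie in the same new part. Hence
every new part gives `v` either its full utility in the old part or zero, neither of which
exceeds its utility in its own part.
-/

section

variable {V : Type*}

lemma underlying_adj_of_weight_ne_zero {w : V → V → ℤ} {v u : V} (huv : u ≠ v)
    (hw : w v u ≠ 0) : (underlying w).Adj v u :=
  ⟨huv.symm, Or.inl hw⟩

lemma squareGraph_adj_of_weight_ne_zero {w : V → V → ℤ} {v u : V} (huv : u ≠ v)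
    (hw : w v u ≠ 0) : (squareGraph w).Adj v u :=
  ⟨huv.symm, Or.inl (underlying_adj_of_weight_ne_zero huv hw)⟩

lemma squareGraph_adj_of_common_weight_ne_zero {w : V → V → ℤ} {v u u' : V} (huu' : u ≠ u')
    (huv : u ≠ v) (hu'v : u' ≠ v) (hw : w v u ≠ 0) (hw' : w v u' ≠ 0) :
    (squareGraph w).Adj u u' :=
  ⟨huu', Or.inr ⟨v, (underlying_adj_of_weight_ne_zero huv hw).symm,
    underlying_adj_of_weight_ne_zero hu'v hw'⟩⟩

variable [DecidableEq V]

namespace ASHGPart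

variable (π : ASHGPart V) (G : SimpleGraph V)

def restrictGraph : SimpleGraph V where
  Adj a b := G.Adj a b ∧ π.part a = π.part b
  symm := ⟨fun _ _ h => ⟨h.1.symm, h.2.symm⟩⟩
  loopless := ⟨fun v h => G.loopless.irrefl v h.1⟩

lemma restrictGraph_le : π.restrictGraph G ≤ G :=
  fun _ _ h => h.1

lemma part_eq_of_reachable {a b : V}
    (h : (π.restrictGraph G).Reachable a b) : π.part a = π.part b := by
  obtain ⟨p⟩ := h
  induction p with
  | nil => rfl
  | cons hadj _ ih => exact hadj.2.trans ih

open Classical in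
noncomputable def refine : ASHGPart V :=
  { part := fun v => (π.part v).filter ((π.restrictGraph G).Reachable v)
    mem_part := fun v => Finset.mem_filter.2 ⟨π.mem_part v, .rfl⟩
    eq_of_mem := fun u v hu => by
      have huv := (Finset.mem_filter.1 hu).2
      ext x
      simp only [Finset.mem_filter, π.part_eq_of_reachable G huv]
      exact and_congr_right fun _ => ⟨huv.trans, huv.symm.trans⟩ }

lemma mem_refine_part {u v : V} :
    u ∈ (π.refine G).part v ↔ (π.restrictGraph G).Reachable v u := by
  classical
  simp only [refine, Finset.mem_filter, and_iff_right_iff_imp]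
  intro h
  rw [π.part_eq_of_reachable G h]
  exact π.mem_part u

lemma refine_part_subset (v : V) :
    (π.refine G).part v ⊆ π.part v := fun u hu => by
  rw [π.part_eq_of_reachable G ((π.mem_refine_part G).1 hu)]
  exact π.mem_part u

lemma connected_induce_refine_part (v : V) :
    (G.induce (↑((π.refine G).part v) : Set V)).Connected := by
  have hsupp : (↑((π.refine G).part v) : Set V) =
      ((π.restrictGraph G).connectedComponentMk v).supp := by
    ext u
    rw [Finset.mem_coe, mem_refine_part, SimpleGraph.ConnectedComponent.mem_supp_iff,
      SimpleGraph.ConnectedComponent.eq]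
    exact ⟨SimpleGraph.Reachable.symm, SimpleGraph.Reachable.symm⟩
  rw [hsupp]
  exact (SimpleGraph.ConnectedComponent.connected_toSimpleGraph _).mono
    (SimpleGraph.comap_monotone _ (π.restrictGraph_le G))

end ASHGPart

lemma util_eq_of_subset {w : V → V → ℤ} {v : V} {S T : Finset V} (hTS : T ⊆ S)
    (h : ∀ u ∈ S, u ∉ T → u ≠ v → w v u = 0) : util w v T = util w v S :=
  Finset.sum_subset (Finset.erase_subset_erase v hTS) fun u hu hu' => by
    rw [Finset.mem_erase] at hu hu'
    exact h u hu.2 (fun huT => hu' ⟨hu.1, huT⟩) hu.1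

lemma util_eq_zero {w : V → V → ℤ} {v : V} {S : Finset V}
    (h : ∀ u ∈ S, u ≠ v → w v u = 0) : util w v S = 0 :=
  Finset.sum_eq_zero fun u hu => h u (Finset.mem_of_mem_erase hu) (Finset.ne_of_mem_erase hu)

namespace ASHGPart

variable {w : V → V → ℤ} (π : ASHGPart V)

lemma util_refine_part_self (v : V) :
    util w v ((π.refine (squareGraph w)).part v) = util w v (π.part v) := by
  refine util_eq_of_subset (π.refine_part_subset _ v) fun u hu hu_refine huv => ?_
  by_contra hw
  exact hu_refine ((π.mem_refine_part _).2
    (SimpleGraph.Adj.reachable ⟨squareGraph_adj_of_weight_ne_zero huv hw,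
      (π.eq_of_mem u v hu).symm⟩))

lemma util_refine_part_eq_or_eq_zero (v x : V) :
    util w v ((π.refine (squareGraph w)).part x) = util w v (π.part x) ∨
      util w v ((π.refine (squareGraph w)).part x) = 0 := by
  by_cases hfriend : ∃ u ∈ (π.refine (squareGraph w)).part x, u ≠ v ∧ w v u ≠ 0
  · obtain ⟨u, hu, huv, hw⟩ := hfriend
    refine Or.inl (util_eq_of_subset (π.refine_part_subset _ x) fun u' hu' hu'_refine hu'v => ?_)
    by_contra hw'
    have huu' : u ≠ u' := by rintro rfl; exact hu'_refine hu
    have hpart : π.part u = π.part u' := by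
      rw [π.eq_of_mem u x (π.refine_part_subset _ x hu), π.eq_of_mem u' x hu']
    exact hu'_refine ((π.mem_refine_part _).2 (((π.mem_refine_part _).1 hu).trans
      (SimpleGraph.Adj.reachable
        ⟨squareGraph_adj_of_common_weight_ne_zero huu' huv hu'v hw hw', hpart⟩)))
  · push Not at hfriend
    exact Or.inr (util_eq_zero hfriend)

end ASHGPart

lemma NashStable.refine_squareGraph {w : V → V → ℤ} {π : ASHGPart V} (hπ : NashStable w π) :
    NashStable w (π.refine (squareGraph w)) := by
  intro v
  rw [π.util_refine_part_self v]
  refine ⟨(hπ v).1, fun x => ?_⟩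
  rcases π.util_refine_part_eq_or_eq_zero v x with h | h <;> rw [h]
  exacts [(hπ v).2 x, (hπ v).1]

end

theorem stmt_4_general {V : Type*} [DecidableEq V] (w : V → V → ℤ) :
    (∃ π : ASHGPart V, NashStable w π) ↔
    (∃ π : ASHGPart V, NashStable w π ∧
      ∀ v : V, ((squareGraph w).induce (↑(π.part v) : Set V)).Connected) :=
  ⟨fun ⟨π, hπ⟩ => ⟨π.refine (squareGraph w), hπ.refine_squareGraph,
      π.connected_induce_refine_part (squareGraph w)⟩,
    fun ⟨π, hπ, _⟩ => ⟨π, hπ⟩⟩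

theorem stmt_4 {V : Type*} [Fintype V] [DecidableEq V] (w : V → V → ℤ)
    (hw : ∀ v, w v v = 0) :
    (∃ π : ASHGPart V, NashStable w π) ↔
    (∃ π : ASHGPart V, NashStable w π ∧
      ∀ v : V, ((squareGraph w).induce (↑(π.part v) : Set V)).Connected) :=
  stmt_4_general w
end

section
/- Consider the 3-Partition game determined by integers n ≥ 1, T ≥ 1, m ≥ 1 and item values a(1),…,a(m). This game admits a Nash stable partition if and only if there exists a function f : {1,…,m} → {1,…,n} such that Σ_{i : f(i)=j} a(i) = T for every j ∈ {1,…,n}. -/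
/-- The vertex set of the 3-Partition game: `m` item vertices, `n` bin vertices,
the stalker `s` and the helper `s'`. -/
inductive TPV (m n : ℕ) where
  | item : Fin m → TPV m n
  | bin : Fin n → TPV m n
  | s : TPV m n
  | s' : TPV m n
  deriving DecidableEq, Fintype

/-- The weights of the 3-Partition game. -/
def tpw (m n : ℕ) (T : ℤ) (a : Fin m → ℤ) : TPV m n → TPV m n → ℤ
  | .item _, .s => -1
  | .bin _, .s => -1
  | .s, .bin _ => 2 * T
  | .s, .item i => -(a i)
  | .s, .s' => T
  | .s', .s => 1
  | _, _ => 0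

def tpvEquiv (m n : ℕ) : TPV m n ≃ (Fin m ⊕ Fin n) ⊕ Bool where
  toFun v := match v with
    | .item i => .inl (.inl i)
    | .bin j => .inl (.inr j)
    | .s => .inr true
    | .s' => .inr false
  invFun x := match x with
    | .inl (.inl i) => .item i
    | .inl (.inr j) => .bin j
    | .inr true => .s
    | .inr false => .s'
  left_inv v := by cases v <;> rfl
  right_inv x := by rcases x with ((i|j)|(_|_)) <;> rfl

lemma sum_TPV {m n : ℕ} (g : TPV m n → ℤ) :
    ∑ u, g u = (∑ i, g (.item i)) + (∑ j, g (.bin j)) + g .s + g .s' := by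
  rw [← Equiv.sum_comp (tpvEquiv m n).symm g]
  simp [Fintype.sum_sum_type, tpvEquiv]
  ring

section utils
variable {m n : ℕ} {T : ℤ} {a : Fin m → ℤ}

lemma mem_part_iff {V : Type*} [DecidableEq V] (π : ASHGPart V) (u v : V) :
    u ∈ π.part v ↔ π.part u = π.part v := by
  constructor
  · exact π.eq_of_mem u v
  · intro h; rw [← h]; exact π.mem_part u

lemma util_item (i : Fin m) (S : Finset (TPV m n)) :
    util (tpw m n T a) (.item i) S = if TPV.s ∈ S then -1 else 0 := by
  unfold util
  rw [Finset.sum_congr rfl (fun u _ => show tpw m n T a (.item i) u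
    = if u = TPV.s then -1 else 0 by cases u <;> simp [tpw])]
  rw [Finset.sum_ite_eq' (S.erase (.item i)) TPV.s (fun _ => (-1 : ℤ))]
  simp [Finset.mem_erase]

lemma util_bin (j : Fin n) (S : Finset (TPV m n)) :
    util (tpw m n T a) (.bin j) S = if TPV.s ∈ S then -1 else 0 := by
  unfold util
  rw [Finset.sum_congr rfl (fun u _ => show tpw m n T a (.bin j) u
    = if u = TPV.s then -1 else 0 by cases u <;> simp [tpw])]
  rw [Finset.sum_ite_eq' (S.erase (.bin j)) TPV.s (fun _ => (-1 : ℤ))]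
  simp [Finset.mem_erase]

lemma util_s' (S : Finset (TPV m n)) :
    util (tpw m n T a) .s' S = if TPV.s ∈ S then 1 else 0 := by
  unfold util
  rw [Finset.sum_congr rfl (fun u _ => show tpw m n T a .s' u
    = if u = TPV.s then 1 else 0 by cases u <;> simp [tpw])]
  rw [Finset.sum_ite_eq' (S.erase .s') TPV.s (fun _ => (1 : ℤ))]
  simp [Finset.mem_erase]

lemma util_s (S : Finset (TPV m n)) :
    util (tpw m n T a) .s S =
      2 * T * ((Finset.univ.filter (fun j => TPV.bin j ∈ S)).card : ℤ)
      - (∑ i ∈ Finset.univ.filter (fun i => TPV.item i ∈ S), a i)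
      + (if TPV.s' ∈ S then T else 0) := by
  unfold util
  have h0 : tpw m n T a .s .s = 0 := rfl
  rw [Finset.sum_erase S h0]
  have : ∑ u ∈ S, tpw m n T a .s u
      = ∑ u : TPV m n, if u ∈ S then tpw m n T a .s u else 0 := by
    rw [Finset.sum_ite_mem, Finset.univ_inter]
  rw [this, sum_TPV]
  have h1 : ∑ i : Fin m, (if TPV.item i ∈ S then tpw m n T a .s (.item i) else 0)
      = -∑ i ∈ Finset.univ.filter (fun i => TPV.item i ∈ S), a i := by
    rw [← Finset.sum_filter, ← Finset.sum_neg_distrib]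
    rfl
  have h2 : ∑ j : Fin n, (if TPV.bin j ∈ S then tpw m n T a .s (.bin j) else 0)
      = 2 * T * ((Finset.univ.filter (fun j => TPV.bin j ∈ S)).card : ℤ) := by
    rw [← Finset.sum_filter]
    rw [Finset.sum_congr rfl (fun j _ => show tpw m n T a .s (.bin j) = 2*T from rfl),
      Finset.sum_const, nsmul_eq_mul]
    ring
  rw [h1, h2]
  simp [tpw]
  ring
end utils

section reverse
variable {m n : ℕ} {T : ℤ} {a : Fin m → ℤ}

def binCoal (f : Fin m → Fin n) (j : Fin n) : Finset (TPV m n) :=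
  insert (.bin j) ((Finset.univ.filter (fun i => f i = j)).image TPV.item)

@[simp] lemma s_mem_binCoal (f : Fin m → Fin n) (j : Fin n) :
    (TPV.s ∈ binCoal f j) ↔ False := by simp [binCoal]

@[simp] lemma s'_mem_binCoal (f : Fin m → Fin n) (j : Fin n) :
    (TPV.s' ∈ binCoal f j) ↔ False := by simp [binCoal]

@[simp] lemma bin_mem_binCoal (f : Fin m → Fin n) (j j' : Fin n) :
    (TPV.bin j' ∈ binCoal f j) ↔ j' = j := by simp [binCoal]

@[simp] lemma item_mem_binCoal (f : Fin m → Fin n) (j : Fin n) (i : Fin m) :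
    (TPV.item i ∈ binCoal f j) ↔ f i = j := by
  constructor
  · intro h
    rcases Finset.mem_insert.1 h with h | h
    · cases h
    · rcases Finset.mem_image.1 h with ⟨i', hi', he⟩
      cases he
      exact (Finset.mem_filter.1 hi').2
  · intro h
    exact Finset.mem_insert_of_mem (Finset.mem_image.2 ⟨i, Finset.mem_filter.2 ⟨Finset.mem_univ _, h⟩, rfl⟩)

def tpPart (f : Fin m → Fin n) : ASHGPart (TPV m n) where
  part v := match v with
    | .item i => binCoal f (f i)
    | .bin j => binCoal f j
    | .s => {TPV.s, TPV.s'}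
    | .s' => {TPV.s, TPV.s'}
  mem_part v := by cases v <;> simp
  eq_of_mem u v h := by
    cases v <;> cases u <;> simp_all

lemma reverse_dir (hT : 1 ≤ T) (f : Fin m → Fin n)
    (hf : ∀ j : Fin n, ∑ i ∈ Finset.univ.filter (fun i => f i = j), a i = T) :
    ∃ π : ASHGPart (TPV m n), NashStable (tpw m n T a) π := by
  refine ⟨tpPart f, ?_⟩
  have hsD : TPV.s ∈ ({TPV.s, TPV.s'} : Finset (TPV m n)) := by simp
  have hpart : ∀ x : TPV m n, (tpPart f).part x = {TPV.s, TPV.s'} ∨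
      ∃ j, (tpPart f).part x = binCoal f j := by
    intro x; cases x
    · right; exact ⟨_, rfl⟩
    · right; exact ⟨_, rfl⟩
    · left; rfl
    · left; rfl
  -- utility of s in binCoal f j is T
  have hus : ∀ j, util (tpw m n T a) .s (binCoal f j) = T := by
    intro j
    rw [util_s]
    have h1 : Finset.univ.filter (fun j' => TPV.bin j' ∈ binCoal f j) = {j} := by
      ext j'; simp
    have h2 : Finset.univ.filter (fun i => TPV.item i ∈ binCoal f j)
        = Finset.univ.filter (fun i => f i = j) := by
      ext i; simp
    rw [h1, h2, hf]
    simp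
    ring
  have husD : util (tpw m n T a) .s ({TPV.s, TPV.s'} : Finset (TPV m n)) = T := by
    rw [util_s]
    have h1 : Finset.univ.filter (fun j' => TPV.bin j' ∈ ({TPV.s, TPV.s'} : Finset (TPV m n))) = ∅ := by
      ext j'; simp
    have h2 : Finset.univ.filter (fun i => TPV.item i ∈ ({TPV.s, TPV.s'} : Finset (TPV m n))) = ∅ := by
      ext i; simp
    rw [h1, h2]
    simp
  intro v
  cases v with
  | item i =>
      constructor
      · rw [util_item]; simp [tpPart]
      · intro x
        rw [util_item, util_item]
        rcases hpart x with h | ⟨j, h⟩ <;> rw [h] <;> simp [tpPart] <;> omega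
  | bin j =>
      constructor
      · rw [util_bin]; simp [tpPart]
      · intro x
        rw [util_bin, util_bin]
        rcases hpart x with h | ⟨j', h⟩ <;> rw [h] <;> simp [tpPart] <;> omega
  | s =>
      constructor
      · show (0:ℤ) ≤ util (tpw m n T a) .s {TPV.s, TPV.s'}
        rw [husD]; omega
      · intro x
        show util (tpw m n T a) .s ((tpPart f).part x) ≤ util (tpw m n T a) .s {TPV.s, TPV.s'}
        rw [husD]
        rcases hpart x with h | ⟨j, h⟩ <;> rw [h]
        · rw [husD]
        · rw [hus]
  | s' =>
      constructor
      · show (0:ℤ) ≤ util (tpw m n T a) .s' {TPV.s, TPV.s'}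
        rw [util_s']; simp
      · intro x
        show util (tpw m n T a) .s' ((tpPart f).part x) ≤ util (tpw m n T a) .s' {TPV.s, TPV.s'}
        rw [util_s', util_s']
        rcases hpart x with h | ⟨j, h⟩ <;> rw [h] <;> simp
end reverse

section forward
variable {m n : ℕ} {T : ℤ} {a : Fin m → ℤ}

lemma forward_dir (hn : 1 ≤ n) (hT : 1 ≤ T) (ha : ∀ i, 1 ≤ a i)
    (hsum : ∑ i, a i = (n : ℤ) * T)
    (π : ASHGPart (TPV m n)) (hst : NashStable (tpw m n T a) π) :
    ∃ f : Fin m → Fin n, ∀ j : Fin n,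
      ∑ i ∈ Finset.univ.filter (fun i => f i = j), a i = T := by
  classical
  set w := tpw m n T a with hw
  -- Step 1: s' lives with s
  have hss' : TPV.s' ∈ π.part .s := by
    by_contra h
    have h1 : TPV.s ∉ π.part .s' := by
      intro hc
      exact h ((mem_part_iff π _ _).2 (π.eq_of_mem _ _ hc).symm)
    have h2 := (hst .s').2 .s
    rw [util_s', util_s'] at h2
    simp [π.mem_part .s, h1] at h2
  -- Step 2: no bin or item lives with s
  have hbin : ∀ j : Fin n, TPV.s ∉ π.part (.bin j) := by
    intro j hc
    have h1 := (hst (.bin j)).1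
    rw [util_bin] at h1
    simp [hc] at h1
  have hitem : ∀ i : Fin m, TPV.s ∉ π.part (.item i) := by
    intro i hc
    have h1 := (hst (.item i)).1
    rw [util_item] at h1
    simp [hc] at h1
  have hbin' : ∀ j : Fin n, TPV.bin j ∉ π.part .s := by
    intro j hc
    exact hbin j (by rw [π.eq_of_mem _ _ hc]; exact π.mem_part .s)
  have hitem' : ∀ i : Fin m, TPV.item i ∉ π.part .s := by
    intro i hc
    exact hitem i (by rw [π.eq_of_mem _ _ hc]; exact π.mem_part .s)
  -- utility of s in its own part
  have husown : util w .s (π.part .s) = T := by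
    rw [hw, util_s]
    have h1 : Finset.univ.filter (fun j => TPV.bin j ∈ π.part .s) = ∅ := by
      ext j; simp [hbin' j]
    have h2 : Finset.univ.filter (fun i => TPV.item i ∈ π.part .s) = ∅ := by
      ext i; simp [hitem' i]
    rw [h1, h2]
    simp [hss']
  -- bin and item counts
  set Bn : Fin n → ℕ := fun j =>
    (Finset.univ.filter (fun j' => TPV.bin j' ∈ π.part (.bin j))).card with hBn
  set A : Fin n → ℤ := fun j =>
    ∑ i ∈ Finset.univ.filter (fun i => TPV.item i ∈ π.part (.bin j)), a i with hA
  have hs'notin : ∀ j : Fin n, TPV.s' ∉ π.part (.bin j) := by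
    intro j hc
    have := π.eq_of_mem _ _ hc  -- part s' = part (bin j)
    have h2 : π.part .s' = π.part .s := π.eq_of_mem _ _ hss'
    exact hbin j (by rw [← this, h2]; exact π.mem_part .s)
  have hkey : ∀ j : Fin n, 2 * T * (Bn j : ℤ) - A j ≤ T := by
    intro j
    have h1 := (hst .s).2 (.bin j)
    rw [hw, util_s, util_s] at h1
    have h2 : Finset.univ.filter (fun j' => TPV.bin j' ∈ π.part .s) = ∅ := by
      ext j'; simp [hbin' j']
    have h3 : Finset.univ.filter (fun i => TPV.item i ∈ π.part .s) = ∅ := by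
      ext i; simp [hitem' i]
    rw [h2, h3] at h1
    simp [hss', hs'notin j] at h1
    rw [hBn, hA]
    simpa using h1
  have hB1 : ∀ j : Fin n, 1 ≤ Bn j := by
    intro j
    rw [hBn]
    apply Finset.card_pos.2
    exact ⟨j, by simp [π.mem_part]⟩
  -- representative map
  have hne : ∀ j : Fin n, (Finset.univ.filter
      (fun j' => π.part (.bin j') = π.part (.bin j))).Nonempty :=
    fun j => ⟨j, by simp⟩
  set r : Fin n → Fin n := fun j =>
    (Finset.univ.filter (fun j' => π.part (.bin j') = π.part (.bin j))).min' (hne j) with hrdef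
  have hr1 : ∀ j, π.part (.bin (r j)) = π.part (.bin j) := by
    intro j
    have := Finset.min'_mem _ (hne j)
    simpa using this
  have hr2 : ∀ j j', π.part (.bin j') = π.part (.bin j) → r j' = r j := by
    intro j j' h
    have : (Finset.univ.filter (fun k => π.part (.bin k) = π.part (.bin j')))
        = (Finset.univ.filter (fun k => π.part (.bin k) = π.part (.bin j))) := by
      ext k; simp [h]
    simp only [hrdef]
    congr 1
  have hr3 : ∀ j, r (r j) = r j := fun j => hr2 _ _ (hr1 j)
  set R : Finset (Fin n) := Finset.univ.filter (fun j => r j = j) with hR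
  have hmemR : ∀ j, r j ∈ R := by
    intro j; rw [hR]; simp [hr3 j]
  have hfiber : ∀ j ∈ R, Finset.univ.filter (fun j' => r j' = j)
      = Finset.univ.filter (fun j' => π.part (.bin j') = π.part (.bin j)) := by
    intro j hj
    rw [hR] at hj
    have hjj : r j = j := by simpa using hj
    ext j'
    simp only [Finset.mem_filter, Finset.mem_univ, true_and]
    constructor
    · intro h
      rw [← hr1 j', h]
    · intro h
      rw [hr2 j j' h, hjj]
  -- sum of Bn over R equals n
  have hsumB : ∑ j ∈ R, (Bn j : ℤ) = (n : ℤ) := by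
    have h1 : (Finset.univ : Finset (Fin n)).card
        = ∑ j ∈ R, (Finset.univ.filter (fun j' => r j' = j)).card := by
      apply Finset.card_eq_sum_card_fiberwise
      intro j _
      exact hmemR j
    have h2 : ∀ j ∈ R, (Finset.univ.filter (fun j' => r j' = j)).card = Bn j := by
      intro j hj
      rw [hfiber j hj, hBn]
      congr 1
      ext j'
      simp [mem_part_iff]
    have h3 : (Finset.univ : Finset (Fin n)).card = ∑ j ∈ R, Bn j := by
      rw [h1]; exact Finset.sum_congr rfl h2
    have := h3
    rw [Finset.card_univ, Fintype.card_fin] at this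
    rw [← Nat.cast_sum]
    exact_mod_cast this.symm
  -- item sets
  set I : Fin n → Finset (Fin m) := fun j =>
    Finset.univ.filter (fun i => TPV.item i ∈ π.part (.bin j)) with hI
  have hdisj : (R : Set (Fin n)).PairwiseDisjoint I := by
    intro j hj j' hj' hne'
    apply Finset.disjoint_left.2
    intro i hi hi'
    rw [hI] at hi hi'
    simp only [Finset.mem_filter, Finset.mem_univ, true_and] at hi hi'
    have e1 : π.part (.item i) = π.part (.bin j) := π.eq_of_mem _ _ hi
    have e2 : π.part (.item i) = π.part (.bin j') := π.eq_of_mem _ _ hi'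
    have e3 : π.part (.bin j') = π.part (.bin j) := by rw [← e2, e1]
    have : r j' = r j := hr2 _ _ e3
    rw [hR] at hj hj'
    simp only [Finset.mem_coe, Finset.mem_filter, Finset.mem_univ, true_and] at hj hj'
    exact hne' (by rw [← hj', this, hj])
  have hsumA : ∑ j ∈ R, A j = ∑ i ∈ R.biUnion I, a i := by
    rw [Finset.sum_biUnion hdisj]
  have hAle : ∑ j ∈ R, A j ≤ (n : ℤ) * T := by
    rw [hsumA, ← hsum]
    apply Finset.sum_le_sum_of_subset_of_nonneg (Finset.subset_univ _)
    intro i _ _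
    linarith [ha i]
  -- per-j lower bound
  have hlow : ∀ j ∈ R, T * (Bn j : ℤ) ≤ A j := by
    intro j _
    have h1 := hkey j
    have h2 : (1 : ℤ) ≤ (Bn j : ℤ) := by exact_mod_cast hB1 j
    nlinarith
  have hsumlow : (n : ℤ) * T ≤ ∑ j ∈ R, A j := by
    calc (n : ℤ) * T = T * ∑ j ∈ R, (Bn j : ℤ) := by rw [hsumB]; ring
    _ = ∑ j ∈ R, T * (Bn j : ℤ) := by rw [Finset.mul_sum]
    _ ≤ ∑ j ∈ R, A j := Finset.sum_le_sum hlow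
  have hsumEq : ∑ j ∈ R, A j = (n : ℤ) * T := le_antisymm hAle hsumlow
  -- each term equality
  have heach : ∀ j ∈ R, A j = T * (Bn j : ℤ) := by
    have hzero : ∑ j ∈ R, (A j - T * (Bn j : ℤ)) = 0 := by
      rw [Finset.sum_sub_distrib, ← Finset.mul_sum, hsumB, hsumEq]; ring
    intro j hj
    have := (Finset.sum_eq_zero_iff_of_nonneg (fun j hj => by linarith [hlow j hj])).1 hzero j hj
    linarith
  have hBone : ∀ j ∈ R, Bn j = 1 := by
    intro j hj
    have h1 := hkey j
    have h2 := heach j hj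
    have h3 : T * (Bn j : ℤ) ≤ T := by linarith
    have h4 : (Bn j : ℤ) ≤ 1 := by
      by_contra h
      push_neg at h
      nlinarith
    have h5 := hB1 j
    omega
  have hAT : ∀ j ∈ R, A j = T := by
    intro j hj
    rw [heach j hj, hBone j hj]; norm_num
  -- extend to all j : A and Bn depend only on the part
  have hAall : ∀ j, A j = T := by
    intro j
    have : A j = A (r j) := by
      rw [hA]
      simp only
      congr 1
      ext i
      simp [hr1 j]
    rw [this]
    exact hAT _ (hmemR j)
  have hBall : ∀ j, Bn j = 1 := by
    intro j
    have : Bn j = Bn (r j) := by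
      rw [hBn]
      simp only
      congr 1
      ext j'
      simp [hr1 j]
    rw [this]
    exact hBone _ (hmemR j)
  -- all items covered
  have hcover : R.biUnion I = Finset.univ := by
    by_contra h
    obtain ⟨i0, hi0⟩ : ∃ i0, i0 ∉ R.biUnion I := by
      by_contra h2
      push_neg at h2
      exact h (Finset.eq_univ_iff_forall.2 h2)
    have hlt : ∑ i ∈ R.biUnion I, a i < ∑ i ∈ (Finset.univ : Finset (Fin m)), a i := by
      apply Finset.sum_lt_sum_of_subset (Finset.subset_univ _) (Finset.mem_univ i0) hi0
      · linarith [ha i0]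
      · intro i _ _; linarith [ha i]
    rw [← hsumA, hsumEq, hsum] at hlt
    exact lt_irrefl _ hlt
  have hex : ∀ i : Fin m, ∃ j : Fin n, TPV.item i ∈ π.part (.bin j) := by
    intro i
    have : i ∈ R.biUnion I := by rw [hcover]; exact Finset.mem_univ i
    obtain ⟨j, _, hj⟩ := Finset.mem_biUnion.1 this
    rw [hI] at hj
    simp only [Finset.mem_filter] at hj
    exact ⟨j, hj.2⟩
  set f : Fin m → Fin n := fun i => (hex i).choose with hf
  have hfi : ∀ i, TPV.item i ∈ π.part (.bin (f i)) := fun i => (hex i).choose_spec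
  have huniq : ∀ i j, TPV.item i ∈ π.part (.bin j) → f i = j := by
    intro i j hij
    have e1 : π.part (.bin j) = π.part (.bin (f i)) := by
      rw [← π.eq_of_mem _ _ hij, π.eq_of_mem _ _ (hfi i)]
    have m1 : j ∈ Finset.univ.filter (fun j' => TPV.bin j' ∈ π.part (.bin (f i))) := by
      simp [← e1, π.mem_part]
    have m2 : f i ∈ Finset.univ.filter (fun j' => TPV.bin j' ∈ π.part (.bin (f i))) := by
      simp [π.mem_part]
    have hcard := hBall (f i)
    rw [hBn] at hcard
    exact (Finset.card_le_one.1 (le_of_eq hcard) _ m1 _ m2).symm ▸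
      (Finset.card_le_one.1 (le_of_eq hcard) _ m1 _ m2)
  refine ⟨f, ?_⟩
  intro j
  have : Finset.univ.filter (fun i => f i = j) = I j := by
    ext i
    rw [hI]
    simp only [Finset.mem_filter, Finset.mem_univ, true_and]
    constructor
    · rintro rfl; exact hfi i
    · exact huniq i j
  rw [this]
  exact hAall j
end forward

theorem stmt_5 (n m : ℕ) (T : ℤ) (hn : 1 ≤ n) (hm : 1 ≤ m) (hT : 1 ≤ T)
    (a : Fin m → ℤ) (ha : ∀ i, 1 ≤ a i) (hsum : ∑ i, a i = (n : ℤ) * T) :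
    (∃ π : ASHGPart (TPV m n), NashStable (tpw m n T a) π) ↔
    (∃ f : Fin m → Fin n, ∀ j : Fin n,
      ∑ i ∈ Finset.univ.filter (fun i => f i = j), a i = T) := by
  constructor
  · rintro ⟨π, hst⟩
    exact forward_dir hn hT ha hsum π hst
  · rintro ⟨f, hf⟩
    exact reverse_dir hT f hf
end

section
/- In the 3-Partition game determined by integers n ≥ 1, T ≥ 1, m ≥ 1 and item values a(1),…,a(m), for every Nash stable partition π, the part of π containing s consists exactly of the two vertices s and s'. -/
theorem stmt_6 (n m : ℕ) (T : ℤ) (hn : 1 ≤ n) (hm : 1 ≤ m) (hT : 1 ≤ T)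
    (a : Fin m → ℤ) (ha : ∀ i, 1 ≤ a i) (hsum : ∑ i, a i = (n : ℤ) * T)
    (π : ASHGPart (TPV m n)) (hπ : NashStable (tpw m n T a) π) :
    π.part TPV.s = {TPV.s, TPV.s'} := by
  have hsmem : TPV.s ∈ π.part TPV.s := π.mem_part _
  have hs' : TPV.s' ∈ π.part TPV.s := by
    by_contra h
    have hs_not : TPV.s ∉ π.part TPV.s' := by
      intro hs
      have heq := π.eq_of_mem _ _ hs
      rw [heq] at h
      exact h (π.mem_part _)
    have h0 : util (tpw m n T a) TPV.s' (π.part TPV.s') = 0 := by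
      apply Finset.sum_eq_zero
      intro u hu
      have hu' := Finset.mem_of_mem_erase hu
      cases u with
      | s => exact absurd hu' hs_not
      | item i => rfl
      | bin j => rfl
      | s' => rfl
    have h1 : util (tpw m n T a) TPV.s' (π.part TPV.s) = 1 := by
      unfold util
      rw [Finset.sum_eq_single_of_mem TPV.s (Finset.mem_erase.mpr ⟨by simp, hsmem⟩)]
      · rfl
      · intro b hb hbne
        cases b with
        | s => exact absurd rfl hbne
        | item i => rfl
        | bin j => rfl
        | s' => rfl
    have := (hπ TPV.s').2 TPV.s
    rw [h0, h1] at this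
    omega
  have hitem : ∀ i : Fin m, TPV.item i ∉ π.part TPV.s := by
    intro i hmem
    have heq := π.eq_of_mem _ _ hmem
    have hpos := (hπ (TPV.item i)).1
    rw [heq] at hpos
    have hval : util (tpw m n T a) (TPV.item i) (π.part TPV.s) = -1 := by
      unfold util
      rw [Finset.sum_eq_single_of_mem TPV.s (Finset.mem_erase.mpr ⟨by simp, hsmem⟩)]
      · rfl
      · intro b hb hbne
        cases b with
        | s => exact absurd rfl hbne
        | item j => rfl
        | bin j => rfl
        | s' => rfl
    omega
  have hbin : ∀ j : Fin n, TPV.bin j ∉ π.part TPV.s := by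
    intro j hmem
    have heq := π.eq_of_mem _ _ hmem
    have hpos := (hπ (TPV.bin j)).1
    rw [heq] at hpos
    have hval : util (tpw m n T a) (TPV.bin j) (π.part TPV.s) = -1 := by
      unfold util
      rw [Finset.sum_eq_single_of_mem TPV.s (Finset.mem_erase.mpr ⟨by simp, hsmem⟩)]
      · rfl
      · intro b hb hbne
        cases b with
        | s => exact absurd rfl hbne
        | item k => rfl
        | bin k => rfl
        | s' => rfl
    omega
  ext v
  simp only [Finset.mem_insert, Finset.mem_singleton]
  constructor
  · intro hv
    cases v with
    | item i => exact absurd hv (hitem i)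
    | bin j => exact absurd hv (hbin j)
    | s => exact Or.inl rfl
    | s' => exact Or.inr rfl
  · rintro (rfl | rfl)
    · exact hsmem
    · exact hs'
end

section
/- Consider the Bin-Packing game determined by integers n ≥ 1, k ≥ 1, B ≥ 1 and item values v(1),…,v(n). This game admits a connected Nash stable partition if and only if there exists a function f : {1,…,n} → {1,…,k} such that Σ_{j : f(j)=i} v(j) ≤ B for every i ∈ {1,…,k}. -/
/-- A Nash stable partition is connected if every part induces a connected subgraph of
the underlying graph. -/
def ConnNashStable {V : Type*} [DecidableEq V] (w : V → V → ℤ) (π : ASHGPart V) : Prop :=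
  NashStable w π ∧ ∀ x : V, ((underlying w).induce (↑(π.part x) : Set V)).Connected

/-- The vertex set of the Bin-Packing game: `n` item vertices, `k` bin vertices,
and `k` helper vertices. -/
inductive BPV (n k : ℕ) where
  | item : Fin n → BPV n k
  | bin : Fin k → BPV n k
  | helper : Fin k → BPV n k
  deriving DecidableEq, Fintype

/-- The weights of the Bin-Packing game. -/
def bpw (n k : ℕ) (B : ℤ) (v : Fin n → ℤ) : BPV n k → BPV n k → ℤ
  | .bin i, .helper i' => if i = i' then B else 0
  | .item _, .bin _ => 1
  | .bin _, .item j => -(v j)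
  | _, _ => 0


/-!
A Nash stable partition forces every item into a coalition with a bin: an item gains one unit
per bin in its coalition, so an item without a bin would rather join any bin. A bin's utility
is at most `B` minus the total value of the items sharing its coalition, so the items packed
with bin `i` fit into it. Conversely, a packing `f` yields the partition whose coalitions are
`{bᵢ, b'ᵢ} ∪ f⁻¹(i)`: each is a star around `bᵢ`, every item gets utility `1` in every coalition,
and a bin gets `B` minus its load at home but only minus a load elsewhere.
-/

open Finset

namespace ASHGPart

variable {V : Type*} [DecidableEq V]

lemma mem_part_comm (π : ASHGPart V) {u v : V} (h : u ∈ π.part v) : v ∈ π.part u :=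
  π.eq_of_mem u v h ▸ π.mem_part v

def ofFun [Fintype V] {ι : Type*} [DecidableEq ι] (g : V → ι) : ASHGPart V where
  part x := univ.filter fun y => g y = g x
  mem_part x := by simp
  eq_of_mem u v h := by
    rw [mem_filter] at h
    simp only [h.2]

@[simp]
lemma mem_ofFun_part [Fintype V] {ι : Type*} [DecidableEq ι] (g : V → ι) (x y : V) :
    y ∈ (ofFun g).part x ↔ g y = g x := by
  simp [ofFun]

end ASHGPart

lemma util_eq_sum {V : Type*} [DecidableEq V] {w : V → V → ℤ} {x : V} (hx : w x x = 0)
    (S : Finset V) : util w x S = ∑ u ∈ S, w x u :=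
  sum_erase S hx

lemma SimpleGraph.induce_connected_of_forall_adj {V : Type*} (G : SimpleGraph V) {s : Set V}
    {c : V} (hc : c ∈ s) (hadj : ∀ a ∈ s, a ≠ c → G.Adj a c) : (G.induce s).Connected := by
  rw [connected_iff_exists_forall_reachable]
  refine ⟨⟨c, hc⟩, fun ⟨a, ha⟩ => ?_⟩
  by_cases hac : a = c
  · subst hac
    rfl
  · exact SimpleGraph.Adj.reachable (G := G.induce s) (u := ⟨c, hc⟩) (v := ⟨a, ha⟩)
      (hadj a ha hac).symm

namespace BPV

variable {n k : ℕ}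

def equivSum (n k : ℕ) : BPV n k ≃ Fin n ⊕ Fin k ⊕ Fin k where
  toFun
    | .item j => .inl j
    | .bin i => .inr (.inl i)
    | .helper i => .inr (.inr i)
  invFun
    | .inl j => .item j
    | .inr (.inl i) => .bin i
    | .inr (.inr i) => .helper i
  left_inv := by rintro (j | i | i) <;> rfl
  right_inv := by rintro (j | i | i) <;> rfl

lemma sum_univ {M : Type*} [AddCommMonoid M] (g : BPV n k → M) :
    ∑ u, g u = ∑ j, g (item j) + ∑ i, g (bin i) + ∑ i, g (helper i) := by
  rw [← (equivSum n k).symm.sum_comp, Fintype.sum_sum_type, Fintype.sum_sum_type, add_assoc]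
  rfl

lemma sum_finset {M : Type*} [AddCommMonoid M] (S : Finset (BPV n k)) (g : BPV n k → M) :
    ∑ u ∈ S, g u = ∑ j with item j ∈ S, g (item j) + ∑ i with bin i ∈ S, g (bin i) +
      ∑ i with helper i ∈ S, g (helper i) := by
  simp only [sum_filter]
  rw [← sum_univ fun u => if u ∈ S then g u else 0, sum_ite_mem, univ_inter]

def label (f : Fin n → Fin k) : BPV n k → Fin k
  | .item j => f j
  | .bin i => i
  | .helper i => i

@[simp] lemma label_item (f : Fin n → Fin k) (j : Fin n) : label f (item j) = f j := rfl
@[simp] lemma label_bin (f : Fin n → Fin k) (i : Fin k) : label f (bin i) = i := rfl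
@[simp] lemma label_helper (f : Fin n → Fin k) (i : Fin k) : label f (helper i) = i := rfl

end BPV

namespace BinPacking

open BPV

variable {n k : ℕ} {B : ℤ} {v : Fin n → ℤ}

lemma bpw_self (x : BPV n k) : bpw n k B v x x = 0 := by
  cases x <;> simp [bpw]

lemma util_item (j : Fin n) (S : Finset (BPV n k)) :
    util (bpw n k B v) (item j) S = #{i | bin i ∈ S} := by
  rw [util_eq_sum (bpw_self _), sum_finset]
  simp [bpw]

lemma util_bin (i : Fin k) (S : Finset (BPV n k)) :
    util (bpw n k B v) (bin i) S = (if helper i ∈ S then B else 0) - ∑ j with item j ∈ S, v j := by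
  rw [util_eq_sum (bpw_self _), sum_finset]
  simp [bpw, sub_eq_neg_add]

lemma util_helper (i : Fin k) (S : Finset (BPV n k)) :
    util (bpw n k B v) (helper i) S = 0 := by
  rw [util_eq_sum (bpw_self _), sum_finset]
  simp [bpw]

lemma exists_bin_mem_part (hk : 1 ≤ k) {π : ASHGPart (BPV n k)}
    (hπ : NashStable (bpw n k B v) π) (j : Fin n) : ∃ i, bin i ∈ π.part (item j) := by
  by_contra! h
  let i₀ : Fin k := ⟨0, hk⟩
  have hstay := (hπ (item j)).2 (bin i₀)
  rw [util_item, util_item] at hstay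
  have hown : #{i | bin i ∈ π.part (item j)} = 0 := by simp [h]
  have hjoin : 0 < #{i | bin i ∈ π.part (bin i₀)} := card_pos.2 ⟨i₀, by simp [π.mem_part]⟩
  omega

lemma sum_item_mem_part_bin_le (hB : 0 ≤ B) {π : ASHGPart (BPV n k)}
    (hπ : NashStable (bpw n k B v) π) (i : Fin k) : ∑ j with item j ∈ π.part (bin i), v j ≤ B := by
  have hnonneg := (hπ (bin i)).1
  rw [util_bin] at hnonneg
  split_ifs at hnonneg <;> omega

lemma exists_packing_of_nashStable (hk : 1 ≤ k) (hB : 0 ≤ B) (hv : ∀ j, 0 ≤ v j)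
    {π : ASHGPart (BPV n k)} (hπ : NashStable (bpw n k B v) π) :
    ∃ f : Fin n → Fin k, ∀ i, ∑ j with f j = i, v j ≤ B := by
  choose f hf using exists_bin_mem_part hk hπ
  refine ⟨f, fun i => le_trans (sum_le_sum_of_subset_of_nonneg (fun j hj => ?_)
    fun j _ _ => hv j) (sum_item_mem_part_bin_le hB hπ i)⟩
  rw [mem_filter] at hj ⊢
  exact ⟨mem_univ j, hj.2 ▸ π.mem_part_comm (hf j)⟩

variable (f : Fin n → Fin k)

lemma util_item_ofFun_label (j : Fin n) (x : BPV n k) :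
    util (bpw n k B v) (item j) ((ASHGPart.ofFun (label f)).part x) = 1 := by
  rw [util_item]
  simp [filter_eq']

lemma util_bin_ofFun_label (i : Fin k) (x : BPV n k) :
    util (bpw n k B v) (bin i) ((ASHGPart.ofFun (label f)).part x) =
      (if i = label f x then B else 0) - ∑ j with f j = label f x, v j := by
  rw [util_bin]
  simp

lemma nashStable_ofFun_label (hv : ∀ j, 0 ≤ v j) (hf : ∀ i, ∑ j with f j = i, v j ≤ B) :
    NashStable (bpw n k B v) (ASHGPart.ofFun (label f)) := by
  rintro (j | i | i)
  · simp [util_item_ofFun_label]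
  · simp only [util_bin_ofFun_label, label_bin, if_true]
    refine ⟨sub_nonneg.2 (hf i), fun y => ?_⟩
    split_ifs with h
    · subst h
      exact le_rfl
    · rw [zero_sub]
      exact (neg_nonpos.2 (sum_nonneg fun j _ => hv j)).trans (sub_nonneg.2 (hf i))
  · simp [util_helper]

lemma connected_ofFun_label (hB : B ≠ 0) (x : BPV n k) :
    ((underlying (bpw n k B v)).induce
      ((ASHGPart.ofFun (label f)).part x : Set (BPV n k))).Connected := by
  refine SimpleGraph.induce_connected_of_forall_adj _ (c := bin (label f x)) (by simp) ?_
  rintro (j | i | i) ha hne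
  · exact ⟨by simp, Or.inl (by simp [bpw])⟩
  · simp at ha hne
    exact absurd ha hne
  · simp at ha
    exact ⟨by simp, Or.inr (by simp [bpw, ha, hB])⟩

end BinPacking

open BinPacking in
theorem stmt_8_general (n k : ℕ) (B : ℤ) (hk : 1 ≤ k) (hB : 1 ≤ B)
    (v : Fin n → ℤ) (hv : ∀ j, 1 ≤ v j) :
    (∃ π : ASHGPart (BPV n k), ConnNashStable (bpw n k B v) π) ↔
    (∃ f : Fin n → Fin k, ∀ i : Fin k,
      ∑ j ∈ Finset.univ.filter (fun j => f j = i), v j ≤ B) := by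
  have hv₀ : ∀ j, 0 ≤ v j := fun j => zero_le_one.trans (hv j)
  constructor
  · rintro ⟨π, hπ, -⟩
    exact exists_packing_of_nashStable hk (by omega) hv₀ hπ
  · rintro ⟨f, hf⟩
    exact ⟨ASHGPart.ofFun (BPV.label f), nashStable_ofFun_label f hv₀ hf,
      connected_ofFun_label f (by omega)⟩

theorem stmt_8 (n k : ℕ) (B : ℤ) (hn : 1 ≤ n) (hk : 1 ≤ k) (hB : 1 ≤ B)
    (v : Fin n → ℤ) (hv : ∀ j, 1 ≤ v j) (hsum : ∑ j, v j = (k : ℤ) * B) :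
    (∃ π : ASHGPart (BPV n k), ConnNashStable (bpw n k B v) π) ↔
    (∃ f : Fin n → Fin k, ∀ i : Fin k,
      ∑ j ∈ Finset.univ.filter (fun j => f j = i), v j ≤ B) :=
  stmt_8_general n k B hk hB v hv
end

section
/- In the Bin-Packing game determined by integers n ≥ 1, k ≥ 1, B ≥ 1 and item values v(1),…,v(n), for every connected Nash stable partition π: no item vertex u_j forms a singleton part; every part containing an item vertex also contains some bin vertex b_i; and every part P of π satisfies Σ_{j : u_j ∈ P} v(j) ≤ B. -/
/-
Items are attracted only by bins, so a lonely item would deviate to any bin's part; by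
connectivity an item's part contains a neighbour of the item, and the neighbours of an item
are exactly the bins. A bin pays the values of the items in its part and gains at most `B`
from its helper, so nonnegativity of its utility bounds the load of its part by `B`.
-/

lemma util_singleton_self {V : Type*} [DecidableEq V] (w : V → V → ℤ) (v : V) :
    util w v {v} = 0 := by
  simp [util]

lemma exists_adj_of_induce_connected {V : Type*} {G : SimpleGraph V} {S : Set V}
    (hS : (G.induce S).Connected) {x y : V} (hx : x ∈ S) (hy : y ∈ S) (hxy : x ≠ y) :
    ∃ z ∈ S, G.Adj x z := by
  have : Nontrivial S := ⟨⟨⟨x, hx⟩, ⟨y, hy⟩, by simpa using hxy⟩⟩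
  obtain ⟨z, hz⟩ := hS.preconnected.exists_adj_of_nontrivial ⟨x, hx⟩
  exact ⟨z, z.2, hz⟩

section BinPacking

variable {n k : ℕ} {B : ℤ} {v : Fin n → ℤ}

lemma eq_bin_of_underlying_adj_item {j : Fin n} {u : BPV n k}
    (h : (underlying (bpw n k B v)).Adj (.item j) u) : ∃ i, u = .bin i := by
  cases u with
  | bin i => exact ⟨i, rfl⟩
  | item _ | helper _ => simp [underlying, bpw] at h

lemma one_le_util_item_of_bin_mem (j : Fin n) {i : Fin k} {S : Finset (BPV n k)}
    (h : BPV.bin i ∈ S) : 1 ≤ util (bpw n k B v) (.item j) S := by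
  have hbin : BPV.bin i ∈ S.erase (.item j) := Finset.mem_erase.mpr ⟨by simp, h⟩
  calc (1 : ℤ) = bpw n k B v (.item j) (.bin i) := rfl
    _ ≤ util (bpw n k B v) (.item j) S :=
      Finset.single_le_sum (fun u _ => by cases u <;> simp [bpw]) hbin

lemma util_bin_s9 (i : Fin k) (S : Finset (BPV n k)) :
    util (bpw n k B v) (.bin i) S =
      (if BPV.helper i ∈ S then B else 0) - ∑ j ∈ Finset.univ.filter (BPV.item · ∈ S), v j := by
  have hw : ∀ u : BPV n k, bpw n k B v (.bin i) u =
      (if u = .helper i then B else 0) + ∑ j, (if u = .item j then -v j else 0) := by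
    intro u
    cases u <;> simp [bpw, eq_comm]
  rw [util, Finset.sum_erase _ (rfl : bpw n k B v (.bin i) (.bin i) = 0)]
  simp_rw [hw, Finset.sum_add_distrib, Finset.sum_ite_eq' S]
  rw [Finset.sum_comm]
  simp_rw [Finset.sum_ite_eq' S, ← Finset.sum_filter, Finset.sum_neg_distrib]
  ring

variable {π : ASHGPart (BPV n k)}

lemma part_item_ne_singleton (hk : 1 ≤ k) (hπ : NashStable (bpw n k B v) π) (j : Fin n) :
    π.part (.item j) ≠ {.item j} := by
  intro hsingle
  have hdev := (hπ (.item j)).2 (.bin ⟨0, hk⟩)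
  have hgain := one_le_util_item_of_bin_mem (B := B) (v := v) j (π.mem_part (.bin ⟨0, hk⟩))
  rw [hsingle, util_singleton_self] at hdev
  omega

lemma exists_bin_mem_part_item (hk : 1 ≤ k) (hπ : ConnNashStable (bpw n k B v) π) (j : Fin n) :
    ∃ i, BPV.bin i ∈ π.part (.item j) := by
  have hj := π.mem_part (.item j)
  obtain ⟨y, hy, hyj⟩ : ∃ y ∈ π.part (.item j), y ≠ .item j := by
    by_contra! h
    exact part_item_ne_singleton hk hπ.1 j (Finset.eq_singleton_iff_unique_mem.mpr ⟨hj, h⟩)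
  obtain ⟨u, hu, hadj⟩ := exists_adj_of_induce_connected (hπ.2 (.item j))
    (Finset.mem_coe.mpr hj) (Finset.mem_coe.mpr hy) hyj.symm
  obtain ⟨i, rfl⟩ := eq_bin_of_underlying_adj_item hadj
  exact ⟨i, hu⟩

lemma sum_item_part_bin_le (hB : 0 ≤ B) (hπ : NashStable (bpw n k B v) π) (i : Fin k) :
    ∑ j ∈ Finset.univ.filter (BPV.item · ∈ π.part (.bin i)), v j ≤ B := by
  have h := (hπ (.bin i)).1
  rw [util_bin_s9] at h
  split_ifs at h <;> omega

lemma sum_item_part_le (hk : 1 ≤ k) (hB : 0 ≤ B) (hπ : ConnNashStable (bpw n k B v) π)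
    (x : BPV n k) : ∑ j ∈ Finset.univ.filter (BPV.item · ∈ π.part x), v j ≤ B := by
  by_cases hitem : ∃ j, BPV.item j ∈ π.part x
  · obtain ⟨j, hj⟩ := hitem
    obtain ⟨i, hi⟩ := exists_bin_mem_part_item hk hπ j
    rw [π.eq_of_mem _ _ hj] at hi
    rw [← π.eq_of_mem _ _ hi]
    exact sum_item_part_bin_le hB hπ.1 i
  · simpa [Finset.filter_false_of_mem fun j _ => not_exists.mp hitem j] using hB

end BinPacking

theorem stmt_9_general (n k : ℕ) (B : ℤ) (hk : 1 ≤ k) (hB : 1 ≤ B)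
    (v : Fin n → ℤ)
    (π : ASHGPart (BPV n k)) (hπ : ConnNashStable (bpw n k B v) π) :
    (∀ j : Fin n, π.part (BPV.item j) ≠ {BPV.item j}) ∧
    (∀ j : Fin n, ∃ i : Fin k, BPV.bin i ∈ π.part (BPV.item j)) ∧
    (∀ x : BPV n k,
      ∑ j ∈ Finset.univ.filter (fun j => BPV.item j ∈ π.part x), v j ≤ B) :=
  ⟨part_item_ne_singleton hk hπ.1, exists_bin_mem_part_item hk hπ,
    sum_item_part_le hk (by omega) hπ⟩

theorem stmt_9 (n k : ℕ) (B : ℤ) (hn : 1 ≤ n) (hk : 1 ≤ k) (hB : 1 ≤ B)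
    (v : Fin n → ℤ) (hv : ∀ j, 1 ≤ v j) (hsum : ∑ j, v j = (k : ℤ) * B)
    (π : ASHGPart (BPV n k)) (hπ : ConnNashStable (bpw n k B v) π) :
    (∀ j : Fin n, π.part (BPV.item j) ≠ {BPV.item j}) ∧
    (∀ j : Fin n, ∃ i : Fin k, BPV.bin i ∈ π.part (BPV.item j)) ∧
    (∀ x : BPV n k,
      ∑ j ∈ Finset.univ.filter (fun j => BPV.item j ∈ π.part x), v j ≤ B) :=
  stmt_9_general n k B hk hB v π hπ
end

section
/- Let (V,w) be an additively separable hedonic game containing, for some m ≥ 1, pairwise distinct vertices r_1,…,r_m, r'_1,…,r'_m, r''_1,…,r''_m, c_1,…,c_m such that: w(r_k,r'_k) = 1 and w(r_k,r''_k) = −2 for all k; w(r_k,r_{k+1}) = 2 and w(r_{k+1},r_k) = −1 for all 1 ≤ k < m; w(r_1,c_1) = −2 and w(r_k,c_k) = −1 for all 2 ≤ k ≤ m; and w(r_k,x) = 0 for every k and every vertex x not listed above. Then no Nash stable partition of V places c_k in the same part as r_k for every k ∈ {1,…,m}. -/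
theorem stmt_11 {V : Type*} [Fintype V] [DecidableEq V] (w : V → V → ℤ)
    (hw : ∀ v, w v v = 0) (m : ℕ) (hm : 1 ≤ m)
    (r r' r'' c : ℕ → V)
    -- the 4m vertices r_1,…,r_m, r'_1,…,r'_m, r''_1,…,r''_m, c_1,…,c_m are pairwise distinct
    (hdist : ∀ k l, 1 ≤ k → k ≤ m → 1 ≤ l → l ≤ m →
      ((k ≠ l → r k ≠ r l ∧ r' k ≠ r' l ∧ r'' k ≠ r'' l ∧ c k ≠ c l) ∧
        r k ≠ r' l ∧ r k ≠ r'' l ∧ r k ≠ c l ∧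
        r' k ≠ r'' l ∧ r' k ≠ c l ∧ r'' k ≠ c l))
    (h1 : ∀ k, 1 ≤ k → k ≤ m → w (r k) (r' k) = 1 ∧ w (r k) (r'' k) = -2)
    (h2 : ∀ k, 1 ≤ k → k < m → w (r k) (r (k + 1)) = 2 ∧ w (r (k + 1)) (r k) = -1)
    (h3 : w (r 1) (c 1) = -2)
    (h4 : ∀ k, 2 ≤ k → k ≤ m → w (r k) (c k) = -1)
    -- all other out-weights of the vertices r_k are zero
    (h5 : ∀ k, 1 ≤ k → k ≤ m → ∀ x : V,
      x ≠ r' k → x ≠ r'' k → x ≠ c k →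
      (k < m → x ≠ r (k + 1)) → (2 ≤ k → x ≠ r (k - 1)) →
      w (r k) x = 0)
    (π : ASHGPart V) (hπ : NashStable w π) :
    ¬ ∀ k, 1 ≤ k → k ≤ m → c k ∈ π.part (r k) := by
  intro hc
  -- Main lemma: if c_k is with r_k, r_{k-1} is with r_k (when k ≥ 2), and r_{k+1} is NOT
  -- with r_k (when k < m), then r_k has negative utility, contradicting Nash stability.
  have main : ∀ k, 1 ≤ k → k ≤ m →
      (2 ≤ k → r (k-1) ∈ π.part (r k)) → (k < m → r (k+1) ∉ π.part (r k)) → False := by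
    intro k hk1 hkm hprev hnext
    have hck : c k ∈ π.part (r k) := hc k hk1 hkm
    have h0 := (hπ (r k)).1
    set S := π.part (r k) with hS
    have hckr : c k ≠ r k := ((hdist k k hk1 hkm hk1 hkm).2.2.2.1).symm
    have hcT : c k ∈ S.erase (r k) := Finset.mem_erase.mpr ⟨hckr, hck⟩
    rcases Nat.lt_or_ge k 2 with hk2 | hk2
    · -- k = 1
      have hk : k = 1 := by omega
      subst hk
      have h1' := h1 1 le_rfl hm
      have hbound : ∀ u ∈ (S.erase (r 1)).erase (c 1),
          w (r 1) u ≤ (if u = r' 1 then 1 else 0) := by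
        intro u hu
        have hu1 : u ≠ c 1 := (Finset.mem_erase.mp hu).1
        have hu2 : u ≠ r 1 := (Finset.mem_erase.mp (Finset.mem_erase.mp hu).2).1
        have huS : u ∈ S := Finset.mem_of_mem_erase (Finset.mem_of_mem_erase hu)
        by_cases h : u = r' 1
        · simp [h, h1'.1]
        · rw [if_neg h]
          by_cases h'' : u = r'' 1
          · rw [h'', h1'.2]; norm_num
          · rw [h5 1 le_rfl hm u h h'' hu1
              (fun h1m heq => hnext h1m (heq ▸ huS))
              (fun habs => absurd habs (by norm_num))]
      have e1 : util w (r 1) S = w (r 1) (c 1) + ∑ u ∈ (S.erase (r 1)).erase (c 1), w (r 1) u :=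
        (Finset.add_sum_erase _ _ hcT).symm
      have e2 : ∑ u ∈ (S.erase (r 1)).erase (c 1), w (r 1) u ≤
          ∑ u ∈ (S.erase (r 1)).erase (c 1), (if u = r' 1 then (1:ℤ) else 0) :=
        Finset.sum_le_sum hbound
      have e3 : ∑ u ∈ (S.erase (r 1)).erase (c 1), (if u = r' 1 then (1:ℤ) else 0) ≤
          ∑ u ∈ (Finset.univ : Finset V), (if u = r' 1 then (1:ℤ) else 0) :=
        Finset.sum_le_sum_of_subset_of_nonneg (Finset.subset_univ _)
          (by intro i _ _; split <;> norm_num)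
      have e4 : ∑ u ∈ (Finset.univ : Finset V), (if u = r' 1 then (1:ℤ) else 0) = 1 := by
        simp
      linarith [h3]
    · -- k ≥ 2
      have hk1m : 1 ≤ k - 1 := by omega
      have hkm' : k - 1 ≤ m := by omega
      have hd := hdist (k-1) k hk1m hkm' hk1 hkm
      have hrp : r (k-1) ∈ S := hprev hk2
      have hrp1 : r (k-1) ≠ r k := (hd.1 (by omega)).1
      have hrp2 : r (k-1) ≠ c k := hd.2.2.2.1
      have hrT : r (k-1) ∈ (S.erase (r k)).erase (c k) :=
        Finset.mem_erase.mpr ⟨hrp2, Finset.mem_erase.mpr ⟨hrp1, hrp⟩⟩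
      have hw_ck : w (r k) (c k) = -1 := h4 k hk2 hkm
      have hw_rp : w (r k) (r (k-1)) = -1 := by
        have := (h2 (k-1) hk1m (by omega)).2
        rwa [show k - 1 + 1 = k by omega] at this
      have h1' := h1 k hk1 hkm
      have hbound : ∀ u ∈ ((S.erase (r k)).erase (c k)).erase (r (k-1)),
          w (r k) u ≤ (if u = r' k then 1 else 0) := by
        intro u hu
        have hu0 : u ≠ r (k-1) := (Finset.mem_erase.mp hu).1
        have hu' := Finset.mem_of_mem_erase hu
        have hu1 : u ≠ c k := (Finset.mem_erase.mp hu').1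
        have hu2 : u ≠ r k := (Finset.mem_erase.mp (Finset.mem_erase.mp hu').2).1
        have huS : u ∈ S := Finset.mem_of_mem_erase (Finset.mem_of_mem_erase hu')
        by_cases h : u = r' k
        · simp [h, h1'.1]
        · rw [if_neg h]
          by_cases h'' : u = r'' k
          · rw [h'', h1'.2]; norm_num
          · rw [h5 k hk1 hkm u h h'' hu1
              (fun hlt heq => hnext hlt (heq ▸ huS)) (fun _ => hu0)]
      have e1 : util w (r k) S = w (r k) (c k) +
          (w (r k) (r (k-1)) + ∑ u ∈ ((S.erase (r k)).erase (c k)).erase (r (k-1)), w (r k) u) := by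
        rw [Finset.add_sum_erase _ _ hrT, Finset.add_sum_erase _ _ hcT]
        rfl
      have e2 : ∑ u ∈ ((S.erase (r k)).erase (c k)).erase (r (k-1)), w (r k) u ≤
          ∑ u ∈ ((S.erase (r k)).erase (c k)).erase (r (k-1)), (if u = r' k then (1:ℤ) else 0) :=
        Finset.sum_le_sum hbound
      have e3 : ∑ u ∈ ((S.erase (r k)).erase (c k)).erase (r (k-1)), (if u = r' k then (1:ℤ) else 0) ≤
          ∑ u ∈ (Finset.univ : Finset V), (if u = r' k then (1:ℤ) else 0) :=
        Finset.sum_le_sum_of_subset_of_nonneg (Finset.subset_univ _)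
          (by intro i _ _; split <;> norm_num)
      have e4 : ∑ u ∈ (Finset.univ : Finset V), (if u = r' k then (1:ℤ) else 0) = 1 := by
        simp
      linarith
  -- All r_k lie in the same part
  have key : ∀ k, 1 ≤ k → k ≤ m → π.part (r k) = π.part (r 1) := by
    intro k
    induction k using Nat.strong_induction_on with
    | _ k ih =>
      intro hk1 hkm
      rcases Nat.lt_or_ge k 2 with h | h
      · have : k = 1 := by omega
        rw [this]
      · have hj1 : 1 ≤ k - 1 := by omega
        have hjm : k - 1 ≤ m := by omega
        have hpart : π.part (r (k-1)) = π.part (r 1) := ih (k-1) (by omega) hj1 hjm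
        have hmem : r k ∈ π.part (r (k-1)) := by
          by_contra hnot
          apply main (k-1) hj1 hjm
          · intro h2j
            have hmm := π.mem_part (r (k-1-1))
            rw [ih (k-1-1) (by omega) (by omega) (by omega)] at hmm
            rw [hpart]
            exact hmm
          · intro _
            rw [show k - 1 + 1 = k by omega]
            exact hnot
        have := π.eq_of_mem (r k) (r (k-1)) hmem
        rw [this, hpart]
  -- Conclude with k = m
  apply main m hm le_rfl
  · intro h2m
    have hmm := π.mem_part (r (m-1))
    rw [key (m-1) (by omega) (by omega)] at hmm
    rw [key m hm le_rfl]
    exact hmm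
  · intro h
    exact absurd h (lt_irrefl m)
end

section
/- Let (V,w) be an additively separable hedonic game containing, for some d ≥ 1, pairwise distinct vertices c, u_0,…,u_{d−1}, u'_0,…,u'_{d−1} such that: w(c,u_i) = 4^i and w(c,u'_i) = −4^i for every i ∈ {0,…,d−1}, and w(c,x) = 0 for every other vertex x; and for every i, all out-weights of u_i and of u'_i are nonpositive (w(u_i,x) ≤ 0 and w(u'_i,x) ≤ 0 for all x), with w(u_i,c) < 0 and w(u'_i,c) < 0. Then in every Nash stable partition of V, for every i ∈ {0,…,d−1}, the vertices u_i and u'_i lie in the same part. -/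
lemma ashg_geom_lt (n : ℕ) : ∑ k ∈ Finset.range n, (4:ℤ)^k < 4^n := by
  induction n with
  | zero => simp
  | succ n ih =>
    rw [Finset.sum_range_succ, pow_succ]
    have : (0:ℤ) < 4^n := by positivity
    linarith

lemma ashg_notin_part {V : Type*} [DecidableEq V] (w : V → V → ℤ) (π : ASHGPart V)
    (hπ : NashStable w π) (v c : V) (hvc : v ≠ c) (hneg : w v c < 0)
    (hnp : ∀ x, w v x ≤ 0) : v ∉ π.part c := by
  intro hmem
  have hpe := π.eq_of_mem v c hmem
  have h0 := (hπ v).1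
  have hcm : c ∈ (π.part v).erase v :=
    Finset.mem_erase.mpr ⟨hvc.symm, hpe ▸ π.mem_part c⟩
  have hutil : util w v (π.part v) < 0 := by
    unfold util
    have hadd := Finset.add_sum_erase _ (w v) hcm
    have hs : ∑ x ∈ ((π.part v).erase v).erase c, w v x ≤ 0 :=
      Finset.sum_nonpos (fun x _ => hnp x)
    linarith [hadd]
  linarith

theorem stmt_12 {V : Type*} [Fintype V] [DecidableEq V] (w : V → V → ℤ)
    (hw : ∀ v, w v v = 0) (d : ℕ) (hd : 1 ≤ d)
    (c : V) (u u' : Fin d → V)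
    -- the vertices c, u_0,…,u_{d-1}, u'_0,…,u'_{d-1} are pairwise distinct
    (hdist : ∀ i j : Fin d, u i ≠ c ∧ u' i ≠ c ∧ u i ≠ u' j ∧
      (i ≠ j → u i ≠ u j ∧ u' i ≠ u' j))
    (hcu : ∀ i : Fin d, w c (u i) = 4 ^ (i : ℕ))
    (hcu' : ∀ i : Fin d, w c (u' i) = -(4 ^ (i : ℕ)))
    (hc0 : ∀ x : V, x ≠ c → (∀ i, x ≠ u i) → (∀ i, x ≠ u' i) → w c x = 0)
    (hnonpos : ∀ i : Fin d, ∀ x : V, w (u i) x ≤ 0 ∧ w (u' i) x ≤ 0)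
    (hneg : ∀ i : Fin d, w (u i) c < 0 ∧ w (u' i) c < 0)
    (π : ASHGPart V) (hπ : NashStable w π) :
    ∀ i : Fin d, u' i ∈ π.part (u i) := by
  classical
  have huinj : Function.Injective u := by
    intro a b hab
    by_contra h
    exact ((hdist a b).2.2.2 h).1 hab
  have hu'inj : Function.Injective u' := by
    intro a b hab
    by_contra h
    exact ((hdist a b).2.2.2 h).2 hab
  have huc : ∀ i, u i ≠ c := fun i => (hdist i i).1
  have hu'c : ∀ i, u' i ≠ c := fun i => (hdist i i).2.1
  have huu' : ∀ i j, u i ≠ u' j := fun i j => (hdist i j).2.2.1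
  have hun : ∀ i : Fin d, u i ∉ π.part c := fun i =>
    ashg_notin_part w π hπ (u i) c (huc i) (hneg i).1 (fun x => (hnonpos i x).1)
  have hu'n : ∀ i : Fin d, u' i ∉ π.part c := fun i =>
    ashg_notin_part w π hπ (u' i) c (hu'c i) (hneg i).2 (fun x => (hnonpos i x).2)
  have hcz : util w c (π.part c) = 0 := by
    unfold util
    apply Finset.sum_eq_zero
    intro x hx
    rw [Finset.mem_erase] at hx
    exact hc0 x hx.1 (fun j hxj => hun j (hxj ▸ hx.2)) (fun j hxj => hu'n j (hxj ▸ hx.2))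
  have key : ∀ i : Fin d, (∀ j : Fin d, (i:ℕ) < (j:ℕ) → u' j ∈ π.part (u j)) →
      u' i ∈ π.part (u i) := by
    intro i hind
    by_contra hcon
    have hcS : c ∉ π.part (u i) := by
      intro hcS
      have h1 := π.eq_of_mem c (u i) hcS
      exact hun i (by rw [h1]; exact π.mem_part (u i))
    have hpt : ∀ x ∈ π.part (u i), w c x = ∑ j : Fin d,
        ((if x = u j then (4:ℤ)^(j:ℕ) else 0) + (if x = u' j then -(4:ℤ)^(j:ℕ) else 0)) := by
      intro x hxS
      have hxc : x ≠ c := fun h => hcS (h ▸ hxS)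
      by_cases h1 : ∃ j, x = u j
      · obtain ⟨j0, rfl⟩ := h1
        rw [hcu j0, Finset.sum_add_distrib]
        have e1 : ∑ j : Fin d, (if u j0 = u j then (4:ℤ)^(j:ℕ) else 0) = 4^(j0:ℕ) := by
          rw [Finset.sum_eq_single j0]
          · simp
          · intro b _ hb
            rw [if_neg (fun h => hb (huinj h).symm)]
          · intro habs; exact absurd (Finset.mem_univ j0) habs
        have e2 : ∑ j : Fin d, (if u j0 = u' j then -(4:ℤ)^(j:ℕ) else 0) = 0 :=
          Finset.sum_eq_zero (fun j _ => if_neg (huu' j0 j))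
        rw [e1, e2, add_zero]
      · by_cases h2 : ∃ j, x = u' j
        · obtain ⟨j0, rfl⟩ := h2
          rw [hcu' j0, Finset.sum_add_distrib]
          have e1 : ∑ j : Fin d, (if u' j0 = u j then (4:ℤ)^(j:ℕ) else 0) = 0 :=
            Finset.sum_eq_zero (fun j _ => if_neg (fun h => huu' j j0 h.symm))
          have e2 : ∑ j : Fin d, (if u' j0 = u' j then -(4:ℤ)^(j:ℕ) else 0) = -4^(j0:ℕ) := by
            rw [Finset.sum_eq_single j0]
            · simp
            · intro b _ hb
              rw [if_neg (fun h => hb (hu'inj h).symm)]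
            · intro habs; exact absurd (Finset.mem_univ j0) habs
          rw [e1, e2, zero_add]
        · push_neg at h1 h2
          rw [hc0 x hxc h1 h2]
          symm
          exact Finset.sum_eq_zero (fun j _ => by rw [if_neg (h1 j), if_neg (h2 j), add_zero])
    have hsum : util w c (π.part (u i)) = ∑ j : Fin d,
        ((if u j ∈ π.part (u i) then (4:ℤ)^(j:ℕ) else 0)
          + (if u' j ∈ π.part (u i) then -(4:ℤ)^(j:ℕ) else 0)) := by
      unfold util
      rw [Finset.erase_eq_of_notMem hcS, Finset.sum_congr rfl hpt, Finset.sum_comm]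
      refine Finset.sum_congr rfl (fun j _ => ?_)
      rw [Finset.sum_add_distrib,
        Finset.sum_ite_eq' (π.part (u i)) (u j) (fun _ => (4:ℤ)^(j:ℕ)),
        Finset.sum_ite_eq' (π.part (u i)) (u' j) (fun _ => -(4:ℤ)^(j:ℕ))]
    set f : Fin d → ℤ := fun j => (if u j ∈ π.part (u i) then (4:ℤ)^(j:ℕ) else 0)
      + (if u' j ∈ π.part (u i) then -(4:ℤ)^(j:ℕ) else 0) with hf
    set g : Fin d → ℤ := fun j => if (j:ℕ) < (i:ℕ) then -(4:ℤ)^(j:ℕ) else 0 with hg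
    have hfi : f i = 4^(i:ℕ) := by
      simp only [hf]
      rw [if_pos (π.mem_part (u i)), if_neg hcon, add_zero]
    have hglower : ∀ j ∈ Finset.univ.erase i, g j ≤ f j := by
      intro j hj
      have hji : j ≠ i := (Finset.mem_erase.mp hj).1
      rcases lt_or_gt_of_ne (fun h => hji (Fin.ext h) : (j:ℕ) ≠ (i:ℕ)) with hlt | hgt
      · have t1 : (0:ℤ) ≤ (if u j ∈ π.part (u i) then (4:ℤ)^(j:ℕ) else 0) := by
          split_ifs
          · positivity
          · exact le_refl 0
        have t2 : -(4:ℤ)^(j:ℕ) ≤ (if u' j ∈ π.part (u i) then -(4:ℤ)^(j:ℕ) else 0) := by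
          split_ifs
          · exact le_refl _
          · exact neg_nonpos.mpr (by positivity)
        simp only [hf, hg, if_pos hlt]
        linarith
      · -- j > i : f j = 0
        have hj' := hind j hgt
        have hiff : u j ∈ π.part (u i) ↔ u' j ∈ π.part (u i) := by
          constructor
          · intro h
            have h1 := π.eq_of_mem (u j) (u i) h
            rw [← h1]; exact hj'
          · intro h
            have h1 := π.eq_of_mem (u' j) (u i) h
            have h2 := π.eq_of_mem (u' j) (u j) hj'
            rw [← h1, h2]; exact π.mem_part (u j)
        simp only [hf, hg, if_neg (not_lt.mpr (le_of_lt hgt))]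
        by_cases h : u j ∈ π.part (u i)
        · rw [if_pos h, if_pos (hiff.mp h)]; ring_nf; exact le_refl _
        · rw [if_neg h, if_neg (fun h' => h (hiff.mpr h'))]; norm_num
    have hgsum : ∑ j : Fin d, g j = -∑ k ∈ Finset.range (i:ℕ), (4:ℤ)^k := by
      have h1 : ∑ j : Fin d, g j
          = ∑ k ∈ Finset.range d, (if k < (i:ℕ) then -(4:ℤ)^k else 0) :=
        Fin.sum_univ_eq_sum_range (fun k => if k < (i:ℕ) then -(4:ℤ)^k else 0) d
      rw [h1, ← Finset.sum_filter]
      have h2 : (Finset.range d).filter (fun k => k < (i:ℕ)) = Finset.range (i:ℕ) := by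
        ext k
        simp only [Finset.mem_filter, Finset.mem_range]
        constructor
        · exact fun h => h.2
        · exact fun h => ⟨lt_trans h i.isLt, h⟩
      rw [h2]
      simp [Finset.sum_neg_distrib]
    have herase : ∑ j ∈ Finset.univ.erase i, g j = ∑ j : Fin d, g j :=
      Finset.sum_erase _ (by simp [hg])
    have hsplit : ∑ j : Fin d, f j = f i + ∑ j ∈ Finset.univ.erase i, f j :=
      (Finset.add_sum_erase _ f (Finset.mem_univ i)).symm
    have hge : ∑ j ∈ Finset.univ.erase i, g j ≤ ∑ j ∈ Finset.univ.erase i, f j :=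
      Finset.sum_le_sum hglower
    have hstab := (hπ c).2 (u i)
    rw [hcz, hsum] at hstab
    have hgeo := ashg_geom_lt (i:ℕ)
    rw [hsplit, hfi] at hstab
    rw [herase, hgsum] at hge
    linarith
  have main : ∀ k : ℕ, ∀ i : Fin d, d - (i:ℕ) ≤ k → u' i ∈ π.part (u i) := by
    intro k
    induction k with
    | zero => intro i hi; exact absurd hi (by have := i.isLt; omega)
    | succ k ih =>
      intro i hi
      apply key
      intro j hj
      exact ih j (by have := j.isLt; omega)
  exact fun i => main d i (by omega)
end

section
/- Let (V,w) be an additively separable hedonic game containing distinct vertices p, p' and a set Q ⊆ V \ {p,p'} such that: w(p,p') = 1, w(p,q) = 1 for every q ∈ Q, and w(p,x) = 0 for every other vertex x; w(p',p) = 1 and w(p',x) = 0 for every x ≠ p; and every q ∈ Q has all out-weights nonpositive (w(q,x) ≤ 0 for all x) with w(q,p) < 0. Then in every Nash stable partition of V, the vertices of Q lie in pairwise distinct parts, and none of them lies in the part containing p. -/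
theorem stmt_13 {V : Type*} [Fintype V] [DecidableEq V] (w : V → V → ℤ)
    (hw : ∀ v, w v v = 0) (p p' : V) (hpp' : p ≠ p') (Q : Finset V)
    (hQp : p ∉ Q) (hQp' : p' ∉ Q)
    (hp1 : w p p' = 1) (hp2 : ∀ q ∈ Q, w p q = 1)
    (hp0 : ∀ x : V, x ≠ p' → x ∉ Q → w p x = 0)
    (hp'1 : w p' p = 1) (hp'0 : ∀ x : V, x ≠ p → w p' x = 0)
    (hq : ∀ q ∈ Q, ∀ x : V, w q x ≤ 0) (hqp : ∀ q ∈ Q, w q p < 0)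
    (π : ASHGPart V) (hπ : NashStable w π) :
    (∀ q₁ ∈ Q, ∀ q₂ ∈ Q, q₁ ≠ q₂ → π.part q₁ ≠ π.part q₂) ∧
    (∀ q ∈ Q, q ∉ π.part p) := by
  -- Step 1: for q ∈ Q, p is not in q's part
  have key : ∀ q ∈ Q, p ∉ π.part q := by
    intro q hqQ hpmem
    have hpq : p ≠ q := fun h => hQp (h ▸ hqQ)
    have hpm : p ∈ (π.part q).erase q := Finset.mem_erase.mpr ⟨hpq, hpmem⟩
    have hsplit : w q p + ∑ u ∈ ((π.part q).erase q).erase p, w q u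
        = ∑ u ∈ (π.part q).erase q, w q u := Finset.add_sum_erase _ _ hpm
    have hrest : ∑ u ∈ ((π.part q).erase q).erase p, w q u ≤ 0 :=
      Finset.sum_nonpos (fun u _ => hq q hqQ u)
    have hlt : util w q (π.part q) < 0 := by
      unfold util
      rw [← hsplit]
      have := hqp q hqQ
      omega
    exact absurd (hπ q).1 (not_le.mpr hlt)
  -- Step 2: for q ∈ Q, q ∉ part p
  have key2 : ∀ q ∈ Q, q ∉ π.part p := by
    intro q hqQ hmem
    have := π.eq_of_mem q p hmem
    exact key q hqQ (this ▸ π.mem_part p)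
  -- Step 3: p' ∈ part p
  have hp'mem : p' ∈ π.part p := by
    have hpm : p ∈ (π.part p).erase p' :=
      Finset.mem_erase.mpr ⟨hpp', π.mem_part p⟩
    have h1 : util w p' (π.part p) = 1 := by
      unfold util
      rw [Finset.sum_eq_single_of_mem p hpm (fun b _ hb => hp'0 b hb), hp'1]
    by_contra hnot
    have h0 : util w p' (π.part p') = 0 := by
      unfold util
      apply Finset.sum_eq_zero
      intro b hb
      apply hp'0
      intro hbp
      subst hbp
      have hpe := π.eq_of_mem b p' (Finset.mem_of_mem_erase hb)
      exact hnot (hpe.symm ▸ π.mem_part p')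
    have := (hπ p').2 p
    rw [h1, h0] at this
    omega
  -- Step 4: util of p in its own part is 1
  have hup : util w p (π.part p) = 1 := by
    have hpm : p' ∈ (π.part p).erase p :=
      Finset.mem_erase.mpr ⟨fun h => hpp' h.symm, hp'mem⟩
    unfold util
    rw [Finset.sum_eq_single_of_mem p' hpm, hp1]
    intro b hb hbp'
    exact hp0 b hbp' (fun hbQ => key2 b hbQ (Finset.mem_of_mem_erase hb))
  constructor
  · intro q₁ h1 q₂ h2 hne heq
    have hq2mem : q₂ ∈ π.part q₁ := heq ▸ π.mem_part q₂
    have hq1ne : q₁ ≠ p := fun h => hQp (h ▸ h1)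
    have hq2ne : q₂ ≠ p := fun h => hQp (h ▸ h2)
    have hsub : ({q₁, q₂} : Finset V) ⊆ (π.part q₁).erase p := by
      intro x hx
      rcases Finset.mem_insert.mp hx with hx | hx
      · subst hx
        exact Finset.mem_erase.mpr ⟨hq1ne, π.mem_part x⟩
      · rw [Finset.mem_singleton] at hx
        subst hx
        exact Finset.mem_erase.mpr ⟨hq2ne, hq2mem⟩
    have hpair : ∑ u ∈ ({q₁, q₂} : Finset V), w p u = 2 := by
      rw [Finset.sum_pair hne, hp2 q₁ h1, hp2 q₂ h2]; norm_num
    have hnonneg : ∀ u ∈ (π.part q₁).erase p, u ∉ ({q₁, q₂} : Finset V) → 0 ≤ w p u := by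
      intro u _ _
      by_cases hu : u = p'
      · subst hu; rw [hp1]; omega
      by_cases huQ : u ∈ Q
      · rw [hp2 u huQ]; omega
      · rw [hp0 u hu huQ]
    have h2le : (2 : ℤ) ≤ util w p (π.part q₁) := by
      unfold util
      rw [← hpair]
      exact Finset.sum_le_sum_of_subset_of_nonneg hsub hnonneg
    have := (hπ p).2 q₁
    rw [hup] at this
    omega
  · exact key2
end

section
/- Let (V,w) be an additively separable hedonic game containing pairwise distinct vertices a, b, x, y such that: w(a,x) = 1, w(a,y) = −1, w(a,b) = 1, and w(a,z) = 0 for every other vertex z; w(b,a) = w(b,x) = w(b,y) = −1, and w(b,z) = 0 for every other vertex z. Then in every Nash stable partition of V, x lies in the same part as a while y does not; in particular x and y lie in distinct parts. -/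
theorem stmt_14 {V : Type*} [Fintype V] [DecidableEq V] (w : V → V → ℤ)
    (hw : ∀ v, w v v = 0) (a b x y : V)
    (hab : a ≠ b) (hax : a ≠ x) (hay : a ≠ y) (hbx : b ≠ x) (hby : b ≠ y) (hxy : x ≠ y)
    (ha1 : w a x = 1) (ha2 : w a y = -1) (ha3 : w a b = 1)
    (ha0 : ∀ z : V, z ≠ x → z ≠ y → z ≠ b → w a z = 0)
    (hb1 : w b a = -1) (hb2 : w b x = -1) (hb3 : w b y = -1)
    (hb0 : ∀ z : V, z ≠ a → z ≠ x → z ≠ y → w b z = 0)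
    (π : ASHGPart V) (hπ : NashStable w π) :
    x ∈ π.part a ∧ y ∉ π.part a ∧ π.part x ≠ π.part y := by
  classical
  obtain ⟨hb_nonneg, _⟩ := hπ b
  obtain ⟨_, ha_stab⟩ := hπ a
  have hble : ∀ u ∈ (π.part b).erase b, w b u ≤ 0 := by
    intro u hu
    rcases eq_or_ne u a with rfl|hua; · simp [hb1]
    rcases eq_or_ne u x with rfl|hux; · simp [hb2]
    rcases eq_or_ne u y with rfl|huy; · simp [hb3]
    simp [hb0 u hua hux huy]
  have hsum0 : util w b (π.part b) = 0 :=
    le_antisymm (Finset.sum_nonpos hble) hb_nonneg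
  have hzero : ∀ u ∈ (π.part b).erase b, w b u = 0 :=
    (Finset.sum_eq_zero_iff_of_nonpos hble).mp hsum0
  have hanb : a ∉ π.part b := by
    intro h
    have := hzero a (Finset.mem_erase.mpr ⟨hab, h⟩)
    rw [hb1] at this; omega
  have hxnb : x ∉ π.part b := by
    intro h
    have := hzero x (Finset.mem_erase.mpr ⟨hbx.symm, h⟩)
    rw [hb2] at this; omega
  have hynb : y ∉ π.part b := by
    intro h
    have := hzero y (Finset.mem_erase.mpr ⟨hby.symm, h⟩)
    rw [hb3] at this; omega
  have hbmem : b ∈ (π.part b).erase a := Finset.mem_erase.mpr ⟨hab.symm, π.mem_part b⟩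
  have h1 : util w a (π.part b) = 1 := by
    unfold util
    rw [Finset.sum_eq_single_of_mem b hbmem]
    · exact ha3
    · intro u hu hub
      have hu' := Finset.mem_erase.mp hu
      exact ha0 u (fun h => hxnb (h ▸ hu'.2)) (fun h => hynb (h ▸ hu'.2)) hub
  have hge1 : 1 ≤ util w a (π.part a) := h1 ▸ ha_stab b
  have hbna : b ∉ π.part a := fun h => hanb (by
    rw [π.eq_of_mem b a h]; exact π.mem_part a)
  have hxa : x ∈ π.part a := by
    by_contra hx
    have hle : util w a (π.part a) ≤ 0 := by
      apply Finset.sum_nonpos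
      intro u hu
      have hu' := Finset.mem_erase.mp hu
      rcases eq_or_ne u y with rfl|huy; · simp [ha2]
      have : w a u = 0 :=
        ha0 u (fun h => hx (h ▸ hu'.2)) huy (fun h => hbna (h ▸ hu'.2))
      omega
    omega
  have hya : y ∉ π.part a := by
    intro hy
    have hmemy : y ∈ (π.part a).erase a := Finset.mem_erase.mpr ⟨hay.symm, hy⟩
    have hsplit : util w a (π.part a)
        = w a y + ∑ u ∈ ((π.part a).erase a).erase y, w a u :=
      (Finset.add_sum_erase _ _ hmemy).symm
    have hbound : ∑ u ∈ ((π.part a).erase a).erase y, w a u ≤ 1 := by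
      calc ∑ u ∈ ((π.part a).erase a).erase y, w a u
          ≤ ∑ u ∈ ((π.part a).erase a).erase y, (if u = x then (1:ℤ) else 0) := by
            apply Finset.sum_le_sum
            intro u hu
            have hu1 := Finset.mem_erase.mp hu
            have hu2 := Finset.mem_erase.mp hu1.2
            rcases eq_or_ne u x with rfl|hux
            · simp [ha1]
            · have : w a u = 0 := ha0 u hux hu1.1 (fun h => hbna (h ▸ hu2.2))
              simp [hux, this]
        _ ≤ 1 := by
            rw [Finset.sum_ite_eq']
            split <;> norm_num
    rw [ha2] at hsplit
    omega
  refine ⟨hxa, hya, ?_⟩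
  intro h
  apply hya
  rw [← π.eq_of_mem x a hxa, h]
  exact π.mem_part y
end
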